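/- arXiv:1112.1250 — 7 statements merged into one kernel-verified Lean document; each statement's English description precedes it below -/
import Mathlib

section
/- For real numbers a, b and nonnegative integers k, ℓ with ℓ ≥ 1, the identity a·[(a-1)_k·(b+1)_ℓ - (a)_k·(b)_ℓ] = ℓ·(a)_{k+1}·(b)_{ℓ-1} - k·(a)_k·(b)_ℓ holds, where (·)_m denotes the falling factorial. -/
open Polynomial

section

variable {R : Type*} [CommRing R]

theorem descPochhammer_succ_eval_left (n : ℕ) (a : R) :
    (descPochhammer R (n + 1)).eval a = a * (descPochhammer R n).eval (a - 1) := by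
  simp [descPochhammer_succ_left, eval_comp]

theorem mul_descPochhammer_eval_sub_one (n : ℕ) (a : R) :
    a * (descPochhammer R n).eval (a - 1) = (descPochhammer R n).eval a * (a - n) := by
  rw [← descPochhammer_succ_eval_left, descPochhammer_succ_eval]

theorem descPochhammer_eval_add_one (n : ℕ) (b : R) :
    (descPochhammer R (n + 1)).eval (b + 1) = (b + 1) * (descPochhammer R n).eval b := by
  rw [descPochhammer_succ_eval_left, add_sub_cancel_right]

/-- Via `a (a-1)_k = (a)_k (a-k)` and `(b+1)_ℓ = (b+1) (b)_{ℓ-1}` both sides become the same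
polynomial multiple of `(a)_k (b)_{ℓ-1}`. At `ℓ = 0` the truncated `ℓ - 1` is harmless: its term
carries the factor `ℓ`. -/
theorem mul_descPochhammer_eval_sub (a b : R) (k ℓ : ℕ) :
    a * ((descPochhammer R k).eval (a - 1) * (descPochhammer R ℓ).eval (b + 1)
        - (descPochhammer R k).eval a * (descPochhammer R ℓ).eval b) =
      (ℓ : R) * (descPochhammer R (k + 1)).eval a * (descPochhammer R (ℓ - 1)).eval b
        - (k : R) * (descPochhammer R k).eval a * (descPochhammer R ℓ).eval b := by
  have hk := mul_descPochhammer_eval_sub_one k a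
  cases ℓ with
  | zero =>
    simp only [descPochhammer_zero, eval_one, Nat.cast_zero, zero_mul, zero_sub]
    linear_combination hk
  | succ m =>
    rw [descPochhammer_eval_add_one, descPochhammer_succ_eval m b, descPochhammer_succ_eval k a,
      Nat.add_sub_cancel]
    push_cast
    linear_combination (b + 1) * (descPochhammer R m).eval b * hk

end

theorem falling_factorial_identity_general (a b : ℝ) (k ℓ : ℕ) :
    a * ((descPochhammer ℝ k).eval (a - 1) * (descPochhammer ℝ ℓ).eval (b + 1)
        - (descPochhammer ℝ k).eval a * (descPochhammer ℝ ℓ).eval b) =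
      (ℓ : ℝ) * (descPochhammer ℝ (k + 1)).eval a *
          (descPochhammer ℝ (ℓ - 1)).eval b
        - (k : ℝ) * (descPochhammer ℝ k).eval a * (descPochhammer ℝ ℓ).eval b :=
  mul_descPochhammer_eval_sub a b k ℓ

/-- For real `a, b` and `k, ℓ : ℕ` with `ℓ ≥ 1`,
`a·[(a-1)_k·(b+1)_ℓ - (a)_k·(b)_ℓ] = ℓ·(a)_{k+1}·(b)_{ℓ-1} - k·(a)_k·(b)_ℓ`,
where `(·)_m` is the falling factorial. -/
theorem falling_factorial_identity (a b : ℝ) (k ℓ : ℕ) (hℓ : 1 ≤ ℓ) :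
    a * ((descPochhammer ℝ k).eval (a - 1) * (descPochhammer ℝ ℓ).eval (b + 1)
        - (descPochhammer ℝ k).eval a * (descPochhammer ℝ ℓ).eval b) =
      (ℓ : ℝ) * (descPochhammer ℝ (k + 1)).eval a *
          (descPochhammer ℝ (ℓ - 1)).eval b
        - (k : ℝ) * (descPochhammer ℝ k).eval a * (descPochhammer ℝ ℓ).eval b :=
  falling_factorial_identity_general a b k ℓ
end

section
/- For real numbers a > s > 0, the inequality e^{a-s}(s/a)^a ≤ exp(-(a-s)²/(2a)) holds. -/
open Finset

/- With `x = (a - s) / a ∈ [0, 1)` we have `s / a = 1 - x`, and the series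
`-log (1 - x) = ∑ xⁿ⁺¹ / (n + 1)` has nonnegative terms, so `log (s / a) ≤ -x - x² / 2`.
Multiplying by `a` and exponentiating gives the bound. -/

namespace Real

theorem sum_range_pow_div_le_neg_log_one_sub {x : ℝ} (hx₀ : 0 ≤ x) (hx₁ : x < 1) (n : ℕ) :
    ∑ i ∈ range n, x ^ (i + 1) / (i + 1) ≤ -log (1 - x) :=
  sum_le_hasSum _ (fun i _ => by positivity)
    (hasSum_pow_div_log_of_abs_lt_one (by rwa [abs_of_nonneg hx₀]))

theorem log_one_sub_le_neg_sub_sq_div_two {x : ℝ} (hx₀ : 0 ≤ x) (hx₁ : x < 1) :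
    log (1 - x) ≤ -x - x ^ 2 / 2 := by
  have h := sum_range_pow_div_le_neg_log_one_sub hx₀ hx₁ 2
  norm_num [sum_range_succ] at h
  linarith

end Real

/-- For real numbers `a > s > 0`, `e^(a-s)·(s/a)^a ≤ exp(-(a-s)²/(2a))`. -/
theorem chernoff_exponent_bound (a s : ℝ) (hs : 0 < s) (hsa : s < a) :
    Real.exp (a - s) * (s / a) ^ a ≤ Real.exp (-(a - s) ^ 2 / (2 * a)) := by
  have ha : 0 < a := hs.trans hsa
  have hlog : Real.log (s / a) ≤ -((a - s) / a) - ((a - s) / a) ^ 2 / 2 := by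
    have hsa_eq : s / a = 1 - (a - s) / a := by field_simp; ring
    rw [hsa_eq]
    exact Real.log_one_sub_le_neg_sub_sq_div_two (by positivity) ((div_lt_one ha).2 (by linarith))
  calc Real.exp (a - s) * (s / a) ^ a = Real.exp (a - s + a * Real.log (s / a)) := by
        rw [Real.rpow_def_of_pos (by positivity), ← Real.exp_add, mul_comm]
    _ ≤ Real.exp (a - s + a * (-((a - s) / a) - ((a - s) / a) ^ 2 / 2)) := by gcongr
    _ = Real.exp (-(a - s) ^ 2 / (2 * a)) := by
        congr 1
        field_simp
        ring
end

section
/- Let 0 < ε < t < 1, let n ≥ 2 and let i > n^{1-t+ε} with i < n. Let X = Σ_{j=i+1}^{n} I_j where I_j are independent Bernoulli with P(I_j=1) = 1/j. Then P(X > t·log n) ≤ exp(-(ε²/(2t))·log n) = n^{-ε²/(2t)}. -/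
open MeasureTheory ProbabilityTheory Real

/-! Chernoff's method with parameter `ε / t`: for independent `{0,1}`-valued `I j`,
`P(a ≤ X) ≤ exp(-l a + (exp l - 1) E X)`, and `E X = ∑_{i < j ≤ n} 1/j ≤ log (n / i) ≤ (t - ε) log n`
by comparison with `∫ dx / x`. The inequality `(exp l - 1)(1 - l) ≤ l - l² / 2` on `[0, 1]` then
turns the exponent into `-(ε² / (2t)) log n`. -/

lemma sum_Icc_inv_le_log_div {i n : ℕ} (hi : 0 < i) (hin : i ≤ n) :
    ∑ j ∈ Finset.Icc (i + 1) n, (j : ℝ)⁻¹ ≤ log (n / i) := by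
  have hi' : (0 : ℝ) < i := by exact_mod_cast hi
  calc ∑ j ∈ Finset.Icc (i + 1) n, (j : ℝ)⁻¹
      = ∑ j ∈ Finset.Ico i n, ((j + 1 : ℕ) : ℝ)⁻¹ := by
        rw [← Finset.Ico_add_one_right_eq_Icc, Finset.sum_Ico_add' (fun j : ℕ ↦ (j : ℝ)⁻¹)]
    _ ≤ ∫ x in (i : ℝ)..n, x⁻¹ := (inv_antitoneOn_Icc_right hi').sum_le_integral_Ico hin
    _ = log (n / i) := integral_inv_of_pos hi' (hi'.trans_le (by exact_mod_cast hin))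

lemma exp_sub_one_mul_one_sub_le {x : ℝ} (hx0 : 0 ≤ x) (hx1 : x ≤ 1) :
    (exp x - 1) * (1 - x) ≤ x - x ^ 2 / 2 := by
  have hexp : exp x ≤ 1 + x + x ^ 2 / 2 + 2 / 9 * x ^ 3 := by
    convert exp_bound' hx0 hx1 (n := 3) (by norm_num) using 1
    norm_num [Finset.sum_range_succ, Nat.factorial]
    ring
  nlinarith [pow_nonneg hx0 3, pow_nonneg hx0 4]

lemma chernoff_exponent_le {t ε L m : ℝ} (hε : 0 < ε) (hεt : ε ≤ t) (hL : 0 ≤ L)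
    (hm : m ≤ (t - ε) * L) :
    -(ε / t) * (t * L) + (exp (ε / t) - 1) * m ≤ -(ε ^ 2 / (2 * t)) * L := by
  have ht : 0 < t := hε.trans_le hεt
  have hkey := exp_sub_one_mul_one_sub_le (div_nonneg hε.le ht.le) ((div_le_one ht).2 hεt)
  have hc : 0 ≤ exp (ε / t) - 1 := by linarith [add_one_le_exp (ε / t), div_pos hε ht]
  calc -(ε / t) * (t * L) + (exp (ε / t) - 1) * m
      ≤ -(ε / t) * (t * L) + (exp (ε / t) - 1) * ((t - ε) * L) := by gcongr
    _ = (t * L) * (-(ε / t) + (exp (ε / t) - 1) * (1 - ε / t)) := by field_simp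
    _ ≤ (t * L) * (-(ε / t) + (ε / t - (ε / t) ^ 2 / 2)) := by gcongr
    _ = -(ε ^ 2 / (2 * t)) * L := by field_simp; ring

section Bernoulli

variable {Ω : Type*} [MeasurableSpace Ω] {μ : Measure Ω}

lemma exp_mul_ae_eq_of_ae_zero_or_one {X : Ω → ℝ} (h01 : ∀ᵐ ω ∂μ, X ω = 0 ∨ X ω = 1) (l : ℝ) :
    (fun ω ↦ exp (l * X ω)) =ᵐ[μ]
      fun ω ↦ 1 + (exp l - 1) * {ω | X ω = 1}.indicator 1 ω := by
  filter_upwards [h01] with ω hω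
  rcases hω with h | h <;> simp [h, Set.indicator]

lemma integrable_exp_mul_of_ae_zero_or_one [IsFiniteMeasure μ] {X : Ω → ℝ} (hX : Measurable X)
    (h01 : ∀ᵐ ω ∂μ, X ω = 0 ∨ X ω = 1) (l : ℝ) :
    Integrable (fun ω ↦ exp (l * X ω)) μ :=
  ((integrable_const 1).add (((integrable_const 1).indicator
    (hX (measurableSet_singleton 1))).const_mul _)).congr
    (exp_mul_ae_eq_of_ae_zero_or_one h01 l).symm

lemma mgf_eq_of_ae_zero_or_one [IsProbabilityMeasure μ] {X : Ω → ℝ} (hX : Measurable X)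
    (h01 : ∀ᵐ ω ∂μ, X ω = 0 ∨ X ω = 1) (l : ℝ) :
    mgf X μ l = 1 + (exp l - 1) * μ.real {ω | X ω = 1} := by
  have hA : MeasurableSet {ω | X ω = 1} := hX (measurableSet_singleton 1)
  rw [mgf, integral_congr_ae (exp_mul_ae_eq_of_ae_zero_or_one h01 l),
    integral_add (integrable_const 1) (((integrable_const 1).indicator hA).const_mul _),
    integral_const_mul, integral_indicator_one hA]
  simp

lemma mgf_le_exp_of_ae_zero_or_one [IsProbabilityMeasure μ] {X : Ω → ℝ} (hX : Measurable X)
    (h01 : ∀ᵐ ω ∂μ, X ω = 0 ∨ X ω = 1) (l : ℝ) :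
    mgf X μ l ≤ exp ((exp l - 1) * μ.real {ω | X ω = 1}) := by
  rw [mgf_eq_of_ae_zero_or_one hX h01, add_comm]
  exact add_one_le_exp _

theorem measureReal_sum_ge_le_exp_of_ae_zero_or_one {ι : Type*} {I : ι → Ω → ℝ}
    (hmeas : ∀ j, Measurable (I j)) (h01 : ∀ j, ∀ᵐ ω ∂μ, I j ω = 0 ∨ I j ω = 1)
    (hindep : iIndepFun I μ) (s : Finset ι) {l : ℝ} (hl : 0 ≤ l) (a : ℝ) :
    μ.real {ω | a ≤ ∑ j ∈ s, I j ω} ≤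
      exp (-l * a + (exp l - 1) * ∑ j ∈ s, μ.real {ω | I j ω = 1}) := by
  have := hindep.isProbabilityMeasure
  have hint := hindep.integrable_exp_mul_sum hmeas (s := s)
    fun j _ ↦ integrable_exp_mul_of_ae_zero_or_one (hmeas j) (h01 j) l
  calc μ.real {ω | a ≤ ∑ j ∈ s, I j ω}
      ≤ exp (-l * a) * mgf (∑ j ∈ s, I j) μ l := by
        simpa only [Finset.sum_apply] using measure_ge_le_exp_mul_mgf a hl hint
    _ = exp (-l * a) * ∏ j ∈ s, mgf (I j) μ l := by rw [hindep.mgf_sum hmeas]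
    _ ≤ exp (-l * a) * ∏ j ∈ s, exp ((exp l - 1) * μ.real {ω | I j ω = 1}) := by
        gcongr with j
        · exact fun _ _ ↦ mgf_nonneg
        · exact mgf_le_exp_of_ae_zero_or_one (hmeas j) (h01 j) l
    _ = exp (-l * a + (exp l - 1) * ∑ j ∈ s, μ.real {ω | I j ω = 1}) := by
        rw [← exp_sum, ← exp_add, Finset.mul_sum]

end Bernoulli

theorem high_degree_upper_bound_general {Ω : Type*} [MeasurableSpace Ω] (μ : Measure Ω)
    [IsProbabilityMeasure μ] (t ε : ℝ) (hε : 0 < ε) (hεt : ε < t)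
    (n i : ℕ) (hi : (n : ℝ) ^ (1 - t + ε) < (i : ℝ)) (hin : i < n)
    (I : ℕ → Ω → ℝ) (hmeas : ∀ j, Measurable (I j))
    (hBer : ∀ j, ∀ᵐ ω ∂μ, I j ω = 0 ∨ I j ω = 1)
    (hP : ∀ j ∈ Finset.Icc (i + 1) n, μ {ω | I j ω = 1} = ENNReal.ofReal (1 / j))
    (hindep : iIndepFun I μ) :
    μ {ω | t * Real.log n < ∑ j ∈ Finset.Icc (i + 1) n, I j ω} ≤
      ENNReal.ofReal (Real.exp (-(ε ^ 2 / (2 * t)) * Real.log n)) ∧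
    Real.exp (-(ε ^ 2 / (2 * t)) * Real.log n) = (n : ℝ) ^ (-(ε ^ 2 / (2 * t))) := by
  have hn : (0 : ℝ) < n := by exact_mod_cast i.zero_le.trans_lt hin
  have hi0 : (0 : ℝ) < i := (rpow_pos_of_pos hn _).trans hi
  have hmean : ∑ j ∈ Finset.Icc (i + 1) n, μ.real {ω | I j ω = 1} ≤ (t - ε) * log n := by
    have hlogi : (1 - t + ε) * log n ≤ log i := by
      simpa only [log_rpow hn] using log_le_log (rpow_pos_of_pos hn _) hi.le
    calc ∑ j ∈ Finset.Icc (i + 1) n, μ.real {ω | I j ω = 1}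
        = ∑ j ∈ Finset.Icc (i + 1) n, (j : ℝ)⁻¹ := Finset.sum_congr rfl fun j hj ↦ by
          rw [measureReal_def, hP j hj, ENNReal.toReal_ofReal (by positivity), one_div]
      _ ≤ log (n / i) := sum_Icc_inv_le_log_div (by exact_mod_cast hi0) hin.le
      _ ≤ (t - ε) * log n := by rw [log_div hn.ne' hi0.ne']; linarith
  refine ⟨?_, by rw [rpow_def_of_pos hn, mul_comm]⟩
  rw [ENNReal.le_ofReal_iff_toReal_le (measure_ne_top _ _) (exp_nonneg _), ← measureReal_def]
  calc μ.real {ω | t * log n < ∑ j ∈ Finset.Icc (i + 1) n, I j ω}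
      ≤ μ.real {ω | t * log n ≤ ∑ j ∈ Finset.Icc (i + 1) n, I j ω} :=
        measureReal_mono (Set.ofPred_subset_ofPred.2 fun _ ↦ le_of_lt)
    _ ≤ exp (-(ε / t) * (t * log n) +
          (exp (ε / t) - 1) * ∑ j ∈ Finset.Icc (i + 1) n, μ.real {ω | I j ω = 1}) :=
        measureReal_sum_ge_le_exp_of_ae_zero_or_one hmeas hBer hindep _
          (div_nonneg hε.le (hε.trans hεt).le) _
    _ ≤ exp (-(ε ^ 2 / (2 * t)) * log n) :=
        exp_le_exp.2 <|
          chernoff_exponent_le hε hεt.le (log_nonneg (by exact_mod_cast hin.pos)) hmean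

/-- Lemma 2.1: for `0 < ε < t < 1`, `n ≥ 2`, and `n^(1-t+ε) < i < n`, the sum
`X = Σ_{j=i+1}^n I_j` of independent Bernoulli indicators with `P(I_j = 1) = 1/j`
satisfies `P(X > t·log n) ≤ exp(-(ε²/(2t))·log n) = n^(-ε²/(2t))`. -/
theorem high_degree_upper_bound {Ω : Type*} [MeasurableSpace Ω] (μ : Measure Ω)
    [IsProbabilityMeasure μ] (t ε : ℝ) (hε : 0 < ε) (hεt : ε < t) (ht : t < 1)
    (n i : ℕ) (hn : 2 ≤ n) (hi : (n : ℝ) ^ (1 - t + ε) < (i : ℝ)) (hin : i < n)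
    (I : ℕ → Ω → ℝ) (hmeas : ∀ j, Measurable (I j))
    (hBer : ∀ j, ∀ᵐ ω ∂μ, I j ω = 0 ∨ I j ω = 1)
    (hP : ∀ j ∈ Finset.Icc (i + 1) n, μ {ω | I j ω = 1} = ENNReal.ofReal (1 / j))
    (hindep : iIndepFun I μ) :
    μ {ω | t * Real.log n < ∑ j ∈ Finset.Icc (i + 1) n, I j ω} ≤
      ENNReal.ofReal (Real.exp (-(ε ^ 2 / (2 * t)) * Real.log n)) ∧
    Real.exp (-(ε ^ 2 / (2 * t)) * Real.log n) = (n : ℝ) ^ (-(ε ^ 2 / (2 * t))) :=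
  high_degree_upper_bound_general μ t ε hε hεt n i hi hin I hmeas hBer hP hindep
end

section
/- In the uniform random recursive tree after n steps, the expected size of level k satisfies E|L_n(k)| ~ (log n)^k / k! as n → ∞, for each fixed k ≥ 1. -/
/-!
A vertex `i ≥ 1` lies on level `k` iff its set of non-root ancestors (itself included) is a
`k`-subset `s ⊆ {1, …, n}` in which the parent of each element is the preceding element of `s`
(or the root). By independence that event has probability `∏ j ∈ s, 1 / j`, so
`E |L_n(k)| = e_k(1, 1/2, …, 1/n)`. For numbers in `[0, 1]` with sum `H`, one has
`(H - k)^k ≤ k! e_k ≤ H^k`, and `H_n = log n + O(1)`.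
-/

open MeasureTheory ProbabilityTheory Filter

/-- Depth (level) of a vertex in the recursive tree with parent function `f`
(vertex `j ≥ 1` has parent `f j`, intended to satisfy `f j < j`). -/
def treeDepth (f : ℕ → ℕ) : ℕ → ℕ
  | 0 => 0
  | n + 1 => treeDepth f (min (f (n + 1)) n) + 1
  decreasing_by exact Nat.lt_succ_of_le (min_le_right _ _)

/-- Degree of vertex `i` in the recursive tree on vertices `0, …, n` with parent
function `f`: the number of children of `i` plus one for the edge to the parent
of `i` when `i ≠ 0`. -/
def treeDeg (f : ℕ → ℕ) (n i : ℕ) : ℕ :=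
  ((Finset.Icc (i + 1) n).filter fun j => f j = i).card + (if i = 0 then 0 else 1)

/-- The set of vertices at distance `k` from the root among vertices `0, …, n`. -/
def level (f : ℕ → ℕ) (n k : ℕ) : Finset ℕ :=
  (Finset.range (n + 1)).filter fun i => treeDepth f i = k

open Finset Topology
open scoped Nat

theorem pow_succ_sub_pow_succ_le {R : Type*} [CommRing R] [LinearOrder R] [IsStrictOrderedRing R]
    {a b c : R} (hb : 0 ≤ b) (hba : b ≤ a) (hac : a ≤ c) (n : ℕ) :
    a ^ (n + 1) - b ^ (n + 1) ≤ (n + 1) * (a - b) * c ^ n := by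
  have bernoulli :=
    pow_add_mul_le_add_pow (hb.trans hba) (by linarith : 0 ≤ 2 * a + (b - a)) (n + 1)
  rw [add_sub_cancel, add_tsub_cancel_right] at bernoulli
  have : a ^ n ≤ c ^ n := pow_le_pow_left₀ (hb.trans hba) hac n
  push_cast at bernoulli
  nlinarith [mul_le_mul_of_nonneg_left this
    (mul_nonneg (by positivity : (0 : R) ≤ n + 1) (sub_nonneg.2 hba))]

namespace Multiset

theorem esymm_cons_succ {R : Type*} [CommSemiring R] (a : R) (m : Multiset R) (k : ℕ) :
    (a ::ₘ m).esymm (k + 1) = m.esymm (k + 1) + a * m.esymm k := by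
  simp only [esymm, powersetCard_cons, map_add, sum_add, map_map, Function.comp_def, prod_cons,
    sum_map_mul_left]

variable {R : Type*} [CommRing R] [LinearOrder R] [IsStrictOrderedRing R]

theorem factorial_mul_esymm_le_sum_pow {m : Multiset R} (hm : ∀ a ∈ m, 0 ≤ a) (k : ℕ) :
    k ! * m.esymm k ≤ m.sum ^ k := by
  induction m using Multiset.induction_on generalizing k with
  | empty => cases k <;> simp [esymm, powersetCard_zero_right]
  | cons a m ih =>
    have ha : 0 ≤ a := hm a (mem_cons_self a m)
    have ih := ih fun b hb => hm b (mem_cons_of_mem hb)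
    have hS : 0 ≤ m.sum := sum_nonneg fun b hb => hm b (mem_cons_of_mem hb)
    cases k with
    | zero => simp [esymm]
    | succ k =>
      calc ((k + 1)! : R) * (a ::ₘ m).esymm (k + 1)
          = (k + 1)! * m.esymm (k + 1) + (k + 1) * a * (k ! * m.esymm k) := by
            rw [esymm_cons_succ, Nat.factorial_succ]; push_cast; ring
        _ ≤ m.sum ^ (k + 1) + (k + 1) * a * m.sum ^ k := by gcongr <;> exact ih _
        _ ≤ (m.sum + a) ^ (k + 1) := by
            simpa [mul_comm, mul_left_comm] using
              pow_add_mul_le_add_pow hS (by positivity : 0 ≤ 2 * m.sum + a) (k + 1)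
        _ = (a ::ₘ m).sum ^ (k + 1) := by rw [sum_cons, add_comm]

theorem max_sum_sub_pow_le_factorial_mul_esymm {m : Multiset R} (hm : ∀ a ∈ m, 0 ≤ a ∧ a ≤ 1)
    (k : ℕ) : max (m.sum - k) 0 ^ k ≤ k ! * m.esymm k := by
  induction m using Multiset.induction_on generalizing k with
  | empty =>
    cases k with
    | zero => simp [esymm]
    | succ k =>
      rw [sum_zero, max_eq_right (by simp; linarith [k.cast_nonneg (α := R)]),
        zero_pow (Nat.succ_ne_zero k)]
      simp [esymm, powersetCard_zero_right]
  | cons x m ih =>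
    obtain ⟨hx0, hx1⟩ := hm x (mem_cons_self x m)
    have ih := ih fun b hb => hm b (mem_cons_of_mem hb)
    cases k with
    | zero => simp [esymm]
    | succ k =>
      have key := pow_succ_sub_pow_succ_le (le_max_right (m.sum - (k + 1 : ℕ)) 0)
        (max_le_max_right 0
          (by simp; linarith : m.sum - (k + 1 : ℕ) ≤ (x ::ₘ m).sum - (k + 1 : ℕ)))
        (max_le_max_right 0 (by simp; linarith : (x ::ₘ m).sum - (k + 1 : ℕ) ≤ m.sum - k)) k
      have hdiff : max ((x ::ₘ m).sum - (k + 1 : ℕ)) 0 - max (m.sum - (k + 1 : ℕ)) 0 ≤ x := by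
        rw [sum_cons]
        rcases le_total (x + m.sum - (k + 1 : ℕ)) 0 with h | h <;>
          rcases le_total (m.sum - (k + 1 : ℕ)) 0 with h' | h' <;>
          simp only [max_eq_left, max_eq_right, h, h'] <;> linarith
      calc max ((x ::ₘ m).sum - (k + 1 : ℕ)) 0 ^ (k + 1)
          ≤ max (m.sum - (k + 1 : ℕ)) 0 ^ (k + 1) + (k + 1) * x * max (m.sum - k) 0 ^ k := by
            nlinarith [mul_le_mul_of_nonneg_right hdiff
              (by positivity : (0 : R) ≤ (k + 1) * max (m.sum - k) 0 ^ k)]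
        _ ≤ (k + 1)! * m.esymm (k + 1) + (k + 1) * x * (k ! * m.esymm k) := by
            gcongr <;> exact ih _
        _ = (k + 1)! * (x ::ₘ m).esymm (k + 1) := by
            rw [esymm_cons_succ, Nat.factorial_succ]; push_cast; ring

end Multiset

theorem tendsto_div_pow_of_le_of_le {α : Type*} {l : Filter α} {a g : α → ℝ}
    (ha : Tendsto a l atTop) {c d : ℝ} {k : ℕ} (hlow : ∀ᶠ x in l, (a x + c) ^ k ≤ g x)
    (hup : ∀ᶠ x in l, g x ≤ (a x + d) ^ k) : Tendsto (fun x => g x / a x ^ k) l (𝓝 1) := by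
  have hpos := ha.eventually_gt_atTop 0
  have shift : ∀ c : ℝ, Tendsto (fun x => (a x + c) ^ k / a x ^ k) l (𝓝 1) := fun c => by
    have : Tendsto (fun x => (1 + c * (a x)⁻¹) ^ k) l (𝓝 1) := by
      simpa using ((tendsto_const_nhds.mul ha.inv_tendsto_atTop).const_add 1).pow k
    refine this.congr' ?_
    filter_upwards [hpos] with x hx
    rw [← div_pow]; field_simp
  refine tendsto_of_tendsto_of_tendsto_of_le_of_le' (shift c) (shift d) ?_ ?_
  · filter_upwards [hpos, hlow] with x hx h using by gcongr
  · filter_upwards [hpos, hup] with x hx h using by gcongr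

/-- The vertex `i` together with its ancestors other than the root `0`. -/
def ancestors (f : ℕ → ℕ) : ℕ → Finset ℕ
  | 0 => ∅
  | n + 1 => insert (n + 1) (ancestors f (min (f (n + 1)) n))
  decreasing_by exact Nat.lt_succ_of_le (min_le_right _ _)

def maxBelow (s : Finset ℕ) (j : ℕ) : ℕ := (s.filter (· < j)).sup id

/-- In the tree with parent function `f`, the elements of `s` in increasing order form a path
starting at a child of the root (for the least `j ∈ s`, `maxBelow s j = 0`). -/
def IsParentChain (f : ℕ → ℕ) (s : Finset ℕ) : Prop := ∀ j ∈ s, f j = maxBelow s j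

instance (f : ℕ → ℕ) : DecidablePred (IsParentChain f) := fun s =>
  inferInstanceAs (Decidable (∀ j ∈ s, f j = maxBelow s j))

theorem maxBelow_lt {j : ℕ} (s : Finset ℕ) (hj : 0 < j) : maxBelow s j < j :=
  (Finset.sup_lt_iff hj).2 fun _ hx => (mem_filter.1 hx).2

section Ancestors

variable (f : ℕ → ℕ)

theorem ancestors_of_lt {i : ℕ} (hi : 0 < i) (hfi : f i < i) :
    ancestors f i = insert i (ancestors f (f i)) := by
  obtain ⟨n, rfl⟩ := Nat.exists_eq_add_of_lt hi
  rw [ancestors, min_eq_left (by omega)]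

theorem ancestors_subset_Icc (i : ℕ) : ancestors f i ⊆ Icc 1 i := by
  induction i using Nat.strong_induction_on with
  | _ i ih =>
    match i with
    | 0 => simp [ancestors]
    | n + 1 =>
      rw [ancestors, insert_subset_iff]
      refine ⟨by simp, (ih _ (Nat.lt_succ_of_le (min_le_right _ _))).trans ?_⟩
      exact Icc_subset_Icc_right (by omega)

theorem card_ancestors (i : ℕ) : #(ancestors f i) = treeDepth f i := by
  induction i using Nat.strong_induction_on with
  | _ i ih =>
    match i with
    | 0 => simp [ancestors, treeDepth]
    | n + 1 =>
      have hlt : min (f (n + 1)) n < n + 1 := Nat.lt_succ_of_le (min_le_right _ _)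
      have hnot : n + 1 ∉ ancestors f (min (f (n + 1)) n) := fun h => by
        simpa using (mem_Icc.1 (ancestors_subset_Icc f _ h)).2.trans_lt hlt
      rw [ancestors, treeDepth, card_insert_of_notMem hnot, ih _ hlt]

theorem sup_ancestors (i : ℕ) : (ancestors f i).sup id = i := by
  apply le_antisymm (Finset.sup_le fun j hj => (mem_Icc.1 (ancestors_subset_Icc f i hj)).2)
  match i with
  | 0 => exact Nat.zero_le _
  | n + 1 => exact le_sup (f := (id : ℕ → ℕ)) (by rw [ancestors]; exact mem_insert_self _ _)

theorem isParentChain_insert_iff {a : ℕ} {s : Finset ℕ} (hs : ∀ x ∈ s, x < a) :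
    IsParentChain f (insert a s) ↔ f a = s.sup id ∧ IsParentChain f s := by
  have below_a : (insert a s).filter (· < a) = s := by
    rw [filter_insert, if_neg (lt_irrefl a), filter_true_of_mem hs]
  have below_j : ∀ j ∈ s, (insert a s).filter (· < j) = s.filter (· < j) := fun j hj => by
    rw [filter_insert, if_neg (hs j hj).asymm]
  simp only [IsParentChain, forall_mem_insert, maxBelow, below_a]
  exact and_congr_right' (forall₂_congr fun j hj => by rw [below_j j hj])

theorem isParentChain_ancestors (hf : ∀ j, 1 ≤ j → f j < j) (i : ℕ) :
    IsParentChain f (ancestors f i) := by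
  induction i using Nat.strong_induction_on with
  | _ i ih =>
    rcases Nat.eq_zero_or_pos i with rfl | hi
    · simp [ancestors, IsParentChain]
    have hfi := hf i hi
    rw [ancestors_of_lt f hi hfi, isParentChain_insert_iff f fun x hx =>
      (mem_Icc.1 (ancestors_subset_Icc f _ hx)).2.trans_lt hfi, sup_ancestors]
    exact ⟨rfl, ih _ hfi⟩

theorem ancestors_sup_of_isParentChain {s : Finset ℕ} (hs0 : 0 ∉ s) (hs : IsParentChain f s) :
    ancestors f (s.sup id) = s := by
  induction s using Finset.induction_on_max with
  | empty => simp [ancestors]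
  | insert a s hlt ih =>
    have ha : 0 < a := Nat.pos_of_ne_zero fun h => hs0 (h ▸ mem_insert_self a s)
    obtain ⟨hfa, hs⟩ := (isParentChain_insert_iff f hlt).1 hs
    have hsup : s.sup id < a := (Finset.sup_lt_iff ha).2 hlt
    rw [sup_insert, id, max_eq_left hsup.le, ancestors_of_lt f ha (hfa ▸ hsup), hfa,
      ih (fun h => hs0 (mem_insert_of_mem h)) hs]

theorem card_level_eq_card_isParentChain (hf : ∀ j, 1 ≤ j → f j < j) (n k : ℕ) :
    #(level f n k) = #{s ∈ (Icc 1 n).powersetCard k | IsParentChain f s} := by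
  refine card_nbij' (ancestors f) (fun s => s.sup id) ?_ ?_ (fun i _ => sup_ancestors f i) ?_
  · intro i hi
    simp only [level, mem_coe, mem_filter, mem_range] at hi
    simp only [mem_coe, mem_filter, mem_powersetCard]
    exact ⟨⟨(ancestors_subset_Icc f i).trans (Icc_subset_Icc_right (by omega)),
      by rw [card_ancestors, hi.2]⟩, isParentChain_ancestors f hf i⟩
  · intro s hs
    simp only [mem_coe, mem_filter, mem_powersetCard] at hs
    obtain ⟨⟨hsub, hcard⟩, hchain⟩ := hs
    have hs0 : 0 ∉ s := fun h => by simpa using hsub h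
    simp only [level, mem_coe, mem_filter, mem_range]
    refine ⟨Nat.lt_succ_of_le (Finset.sup_le fun j hj => (mem_Icc.1 (hsub hj)).2), ?_⟩
    rw [← card_ancestors, ancestors_sup_of_isParentChain f hs0 hchain, hcard]
  · intro s hs
    simp only [mem_coe, mem_filter, mem_powersetCard] at hs
    exact ancestors_sup_of_isParentChain f (fun h => by simpa using hs.1.1 h) hs.2

end Ancestors

section Probability

variable {Ω : Type*} (F : ℕ → Ω → ℕ)

theorem setOf_isParentChain_eq (s : Finset ℕ) :
    {ω | IsParentChain (F · ω) s} = ⋂ j ∈ s, F j ⁻¹' {maxBelow s j} := by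
  ext ω
  simp [IsParentChain]

variable [MeasurableSpace Ω] (μ : Measure Ω)

theorem measurableSet_isParentChain (hmeas : ∀ j, Measurable (F j)) (s : Finset ℕ) :
    MeasurableSet {ω | IsParentChain (F · ω) s} := by
  rw [setOf_isParentChain_eq]
  exact .biInter s.countable_toSet fun j _ => hmeas j (measurableSet_singleton _)

theorem measure_isParentChain
    (hunif : ∀ j, 1 ≤ j → ∀ m, m < j → μ {ω | F j ω = m} = ENNReal.ofReal (1 / j))
    (hindep : iIndepFun F μ) {s : Finset ℕ} (hs0 : 0 ∉ s) :
    μ {ω | IsParentChain (F · ω) s} = ∏ j ∈ s, ENNReal.ofReal (1 / j) := by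
  rw [setOf_isParentChain_eq, hindep.measure_inter_preimage_eq_mul s
    fun j _ => measurableSet_singleton _]
  refine prod_congr rfl fun j hj => ?_
  have hj : 0 < j := Nat.pos_of_ne_zero fun h => hs0 (h ▸ hj)
  exact hunif j hj _ (maxBelow_lt s hj)

theorem integral_card_level_eq_esymm [IsProbabilityMeasure μ] (hmeas : ∀ j, Measurable (F j))
    (hlt : ∀ j, 1 ≤ j → ∀ ω, F j ω < j)
    (hunif : ∀ j, 1 ≤ j → ∀ m, m < j → μ {ω | F j ω = m} = ENNReal.ofReal (1 / j))
    (hindep : iIndepFun F μ) (n k : ℕ) :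
    ∫ ω, (#(level (F · ω) n k) : ℝ) ∂μ
      = ((Icc 1 n).val.map fun j : ℕ => (j : ℝ)⁻¹).esymm k := by
  have hcard : ∀ ω, (#(level (F · ω) n k) : ℝ)
      = ∑ s ∈ (Icc 1 n).powersetCard k, {ω | IsParentChain (F · ω) s}.indicator 1 ω := by
    intro ω
    rw [card_level_eq_card_isParentChain _ (fun j hj => hlt j hj ω), card_filter]
    push_cast
    simp [Set.indicator_apply]
  simp_rw [hcard]
  rw [integral_finsetSum _ fun s _ =>
    (integrable_const 1).indicator (measurableSet_isParentChain F hmeas s), esymm_map_val]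
  refine sum_congr rfl fun s hs => ?_
  have hs0 : 0 ∉ s := fun h => by simpa using (mem_powersetCard.1 hs).1 h
  rw [integral_indicator_one (measurableSet_isParentChain F hmeas s), measureReal_def,
    measure_isParentChain F μ hunif hindep hs0, ENNReal.toReal_prod]
  exact prod_congr rfl fun j _ => by rw [ENNReal.toReal_ofReal (by positivity), one_div]

end Probability

theorem expected_level_size_asymptotic_general {Ω : Type*} [MeasurableSpace Ω] (μ : Measure Ω) [IsProbabilityMeasure μ]
    (F : ℕ → Ω → ℕ) (hmeas : ∀ j, Measurable (F j))
    (hlt : ∀ j, 1 ≤ j → ∀ ω, F j ω < j)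
    (hunif : ∀ j, 1 ≤ j → ∀ m, m < j → μ {ω | F j ω = m} = ENNReal.ofReal (1 / j))
    (hindep : iIndepFun F μ) (k : ℕ) :
    Tendsto (fun n : ℕ =>
        (∫ ω, ((level (fun j => F j ω) n k).card : ℝ) ∂μ) /
          ((Real.log n) ^ k / (Nat.factorial k : ℝ)))
      atTop (nhds 1) := by
  set recips : ℕ → Multiset ℝ := fun n => (Icc 1 n).val.map fun j : ℕ => (j : ℝ)⁻¹
  have hsum (n : ℕ) : (recips n).sum = harmonic n := by
    rw [harmonic_eq_sum_Icc]; push_cast; rfl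
  have hrecips (n : ℕ) : ∀ x ∈ recips n, 0 ≤ x ∧ x ≤ 1 := by
    simp only [recips, Multiset.mem_map, mem_val, mem_Icc]
    rintro _ ⟨j, ⟨hj, -⟩, rfl⟩
    exact ⟨by positivity, inv_le_one_of_one_le₀ (by exact_mod_cast hj)⟩
  have hlog : Tendsto (fun n : ℕ => Real.log n) atTop atTop :=
    Real.tendsto_log_atTop.comp tendsto_natCast_atTop_atTop
  refine (tendsto_div_pow_of_le_of_le (g := fun n => k ! * (recips n).esymm k) (k := k)
    (c := -k) (d := 1) hlog ?_ ?_).congr fun n => ?_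
  · filter_upwards [eventually_ge_atTop 1, hlog.eventually_ge_atTop k] with n hn hlogk
    have hlog_le : Real.log n ≤ harmonic n := calc
      Real.log n ≤ Real.log (n + 1 : ℕ) := Real.log_le_log (by exact_mod_cast hn) (by simp)
      _ ≤ harmonic n := log_add_one_le_harmonic n
    refine (pow_le_pow_left₀ (by linarith) (le_max_of_le_left ?_) k).trans
      (Multiset.max_sum_sub_pow_le_factorial_mul_esymm (hrecips n) k)
    rw [hsum]; linarith
  · refine .of_forall fun n => (Multiset.factorial_mul_esymm_le_sum_pow
      (fun x hx => (hrecips n x hx).1) k).trans (pow_le_pow_left₀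
        (Multiset.sum_nonneg fun x hx => (hrecips n x hx).1) ?_ k)
    rw [hsum, add_comm]
    exact harmonic_le_one_add_log n
  · rw [integral_card_level_eq_esymm F μ hmeas hlt hunif hindep, div_div_eq_mul_div, mul_comm]

/-- In the uniform random recursive tree after `n` steps, the expected size of
level `k` is asymptotically `(log n)^k / k!` for each fixed `k ≥ 1`. -/
theorem expected_level_size_asymptotic {Ω : Type*} [MeasurableSpace Ω] (μ : Measure Ω) [IsProbabilityMeasure μ]
    (F : ℕ → Ω → ℕ) (hmeas : ∀ j, Measurable (F j))
    (hlt : ∀ j, 1 ≤ j → ∀ ω, F j ω < j)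
    (hunif : ∀ j, 1 ≤ j → ∀ m, m < j → μ {ω | F j ω = m} = ENNReal.ofReal (1 / j))
    (hindep : iIndepFun F μ) (k : ℕ) (hk : 1 ≤ k) :
    Tendsto (fun n : ℕ =>
        (∫ ω, ((level (fun j => F j ω) n k).card : ℝ) ∂μ) /
          ((Real.log n) ^ k / (Nat.factorial k : ℝ)))
      atTop (nhds 1) :=
  expected_level_size_asymptotic_general μ F hmeas hlt hunif hindep k
end

section
/- Let E(n, k₁,...,k_d) = E[Π_{i=1}^d (X[n,i])_{k_i}] denote the joint factorial moments of the numbers X[n,i] of degree-i vertices in level 1 of the uniform recursive tree after n steps. Then these satisfy the recursion (n)_K · E(n+1, k₁,...,k_d) = (n-1)_K · E(n, k₁,...,k_d) + (n-1)_{K-1} · Σ_{j=1}^d k_j · E(n, k₁,...,k_{j-1}+1, k_j - 1,...,k_d), where K = k₁ + ... + k_d and (·)_m is the falling factorial (with the convention that the j = 1 term is k₁·E(n, k₁-1, k₂,...,k_d)). -/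
open MeasureTheory ProbabilityTheory Filter

/-- `X[n,d]`: the number of vertices of degree `d` at distance 1 from the root
in the uniform recursive tree after `n` steps, i.e. on vertices `0, …, n-1`. -/
def levelOneDegCount (f : ℕ → ℕ) (n d : ℕ) : ℕ :=
  ((Finset.Icc 1 (n - 1)).filter fun i =>
    treeDepth f i = 1 ∧ treeDeg f (n - 1) i = d).card

/-- The joint factorial moment `E(n, k₁, …, k_d) = E[Π_{i=1}^d (X[n,i])_{k_i}]`. -/
noncomputable def jointFactMoment {Ω : Type*} [MeasurableSpace Ω] (μ : Measure Ω)
    (F : ℕ → Ω → ℕ) (n d : ℕ) (k : ℕ → ℕ) : ℝ :=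
  ∫ ω, ∏ i ∈ Finset.Icc 1 d,
    (descPochhammer ℝ (k i)).eval ((levelOneDegCount (fun j => F j ω) n i : ℕ) : ℝ) ∂μ

/-! Given the first `n` steps, vertex `n` picks a uniform parent `m < n` independently of the
past. With `Y = X[n,·]`, the new count vector is `Y + e₁` if `m` is the root, `Y - e_D + e_{D+1}`
if `m` is one of the `Y_D` level-one vertices of degree `D`, and `Y` otherwise. The identities
`(y+1)_k = (y)_k + k (y)_{k-1}` and `y (y-1)_k = (y)_{k+1} = (y)_k (y-k)` turn the sum over `m` of
`∏ᵢ (Y'ᵢ)_{kᵢ}` into `(n - K) ∏ᵢ (Yᵢ)_{kᵢ} + Σⱼ kⱼ ∏ᵢ (Yᵢ)_{k'ᵢ}`, where `k'` moves one unit from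
`j` to `j - 1`. Taking expectations gives `n E(n+1,k) = (n-K) E(n,k) + Σⱼ kⱼ E(n,k')`, and
multiplying by `(n-1)_{K-1}` gives the recursion. -/

open Finset

theorem descPochhammer_succ_eval_eq_mul {R : Type*} [CommRing R] (k : ℕ) (x : R) :
    (descPochhammer R (k + 1)).eval x = x * (descPochhammer R k).eval (x - 1) := by
  simp [descPochhammer_succ_left, Polynomial.eval_comp]

theorem descPochhammer_eval_add_one_s15 (k : ℕ) (x : ℝ) :
    (descPochhammer ℝ k).eval (x + 1) =
      (descPochhammer ℝ k).eval x + k * (descPochhammer ℝ (k - 1)).eval x := by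
  induction k with
  | zero => simp
  | succ k ih =>
    rw [descPochhammer_succ_eval, ih, descPochhammer_succ_eval k x, Nat.add_sub_cancel]
    rcases k with _ | k
    · simp
    · rw [Nat.add_sub_cancel, descPochhammer_succ_eval k x]
      push_cast
      ring

theorem natCast_mul_descPochhammer_eval_pred (y k : ℕ) :
    (y : ℝ) * (descPochhammer ℝ k).eval ((y - 1 : ℕ) : ℝ) =
      (descPochhammer ℝ (k + 1)).eval (y : ℝ) := by
  rcases y with _ | y
  · simp
  · simp [descPochhammer_succ_eval_eq_mul]

theorem descPochhammer_mul_eq_of_mul_eq {x A B S : ℝ} {K : ℕ} (hx : x ≠ 0)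
    (h : x * A = (x - K) * B + S) (hS : K = 0 → S = 0) :
    (descPochhammer ℝ K).eval x * A =
      (descPochhammer ℝ K).eval (x - 1) * B + (descPochhammer ℝ (K - 1)).eval (x - 1) * S := by
  rcases K with _ | K
  · simp only [CharP.cast_eq_zero, sub_zero, hS rfl, add_zero] at h
    simp [mul_left_cancel₀ hx h, hS rfl]
  · rw [descPochhammer_succ_eval_eq_mul, descPochhammer_succ_eval, Nat.add_sub_cancel]
    push_cast at h
    linear_combination (descPochhammer ℝ K).eval (x - 1) * h

noncomputable def fallingProd (s : Finset ℕ) (k Y : ℕ → ℕ) : ℝ :=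
  ∏ i ∈ s, (descPochhammer ℝ (k i)).eval (Y i : ℝ)

section fallingProd

variable {s : Finset ℕ} {k k' Y Y' : ℕ → ℕ} {a : ℕ}

theorem fallingProd_congr (hk : ∀ i ∈ s, k' i = k i) (hY : ∀ i ∈ s, Y' i = Y i) :
    fallingProd s k' Y' = fallingProd s k Y :=
  prod_congr rfl fun i hi => by rw [hk i hi, hY i hi]

theorem fallingProd_congr_of_notMem (ha : a ∉ s) (hk : ∀ i ≠ a, k' i = k i)
    (hY : ∀ i ≠ a, Y' i = Y i) : fallingProd s k' Y' = fallingProd s k Y :=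
  fallingProd_congr (fun i hi => hk i (ne_of_mem_of_not_mem hi ha))
    fun i hi => hY i (ne_of_mem_of_not_mem hi ha)

theorem fallingProd_eq_mul_erase (ha : a ∈ s) (k Y : ℕ → ℕ) :
    fallingProd s k Y = (descPochhammer ℝ (k a)).eval (Y a : ℝ) * fallingProd (s.erase a) k Y :=
  (mul_prod_erase s _ ha).symm

theorem fallingProd_add_single_of_mem (ha : a ∈ s) (k Y : ℕ → ℕ) :
    fallingProd s k (Y + Pi.single a 1) =
      fallingProd s k Y + k a * fallingProd s (k - Pi.single a 1) Y := by
  rw [fallingProd_eq_mul_erase ha, fallingProd_eq_mul_erase ha k, fallingProd_eq_mul_erase ha,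
    fallingProd_congr_of_notMem (notMem_erase a s) (k' := k) (k := k) (Y := Y) (fun _ _ => rfl)
      (fun i hi => by simp [hi]),
    fallingProd_congr_of_notMem (notMem_erase a s) (k' := k - Pi.single a 1) (k := k)
      (fun i hi => by simp [hi]) (fun _ _ => rfl)]
  simp only [Pi.add_apply, Pi.sub_apply, Pi.single_eq_same, Nat.cast_add, Nat.cast_one,
    descPochhammer_eval_add_one_s15]
  ring

theorem natCast_mul_fallingProd_sub_single (ha : a ∈ s) (k Y : ℕ → ℕ) :
    Y a * fallingProd s k (Y - Pi.single a 1) = fallingProd s (k + Pi.single a 1) Y := by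
  rw [fallingProd_eq_mul_erase ha, fallingProd_eq_mul_erase ha,
    fallingProd_congr_of_notMem (notMem_erase a s) (k' := k + Pi.single a 1) (Y' := Y) (k := k)
      (Y := Y - Pi.single a 1) (fun i hi => by simp [hi]) (fun i hi => by simp [hi]), ← mul_assoc]
  simp only [Pi.add_apply, Pi.sub_apply, Pi.single_eq_same, natCast_mul_descPochhammer_eval_pred]

theorem fallingProd_add_single_self (ha : a ∈ s) (k Y : ℕ → ℕ) :
    fallingProd s (k + Pi.single a 1) Y = (Y a - k a) * fallingProd s k Y := by
  rw [fallingProd_eq_mul_erase ha, fallingProd_eq_mul_erase ha k,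
    fallingProd_congr_of_notMem (notMem_erase a s) (k' := k + Pi.single a 1) (k := k)
      (fun i hi => by simp [hi]) (fun _ _ => rfl)]
  simp only [Pi.add_apply, Pi.single_eq_same, descPochhammer_succ_eval]
  ring

theorem natCast_mul_fallingProd_move (hs : a + 1 ∈ s → a ∈ s) (k Y : ℕ → ℕ) :
    Y a * (fallingProd s k (Y - Pi.single a 1 + Pi.single (a + 1) 1) - fallingProd s k Y) =
      (if a + 1 ∈ s then k (a + 1) * fallingProd s (k - Pi.single (a + 1) 1 + Pi.single a 1) Y
        else 0) - if a ∈ s then k a * fallingProd s k Y else 0 := by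
  by_cases hsucc : a + 1 ∈ s
  · have ha := hs hsucc
    rw [if_pos hsucc, if_pos ha, fallingProd_add_single_of_mem hsucc, mul_sub, mul_add,
      natCast_mul_fallingProd_sub_single ha, fallingProd_add_single_self ha, mul_left_comm,
      natCast_mul_fallingProd_sub_single ha]
    ring
  rw [if_neg hsucc,
    fallingProd_congr_of_notMem hsucc (k := k) (Y := Y - Pi.single a 1) (fun _ _ => rfl)
    (fun i hi => by simp [hi])]
  by_cases ha : a ∈ s
  · rw [if_pos ha, mul_sub, natCast_mul_fallingProd_sub_single ha, fallingProd_add_single_self ha]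
    ring
  · rw [if_neg ha, fallingProd_congr_of_notMem ha (k := k) (Y := Y) (fun _ _ => rfl)
      (fun i hi => by simp [hi])]
    ring

end fallingProd

theorem sum_natCast_mul_fallingProd_move {d N : ℕ} (hdN : d ≤ N) (k Y : ℕ → ℕ) :
    ∑ a ∈ Icc 1 N, Y a *
        (fallingProd (Icc 1 d) k (Y - Pi.single a 1 + Pi.single (a + 1) 1) -
          fallingProd (Icc 1 d) k Y) =
      ∑ j ∈ Ioc 1 d, k j * fallingProd (Icc 1 d) (k - Pi.single j 1 + Pi.single (j - 1) 1) Y -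
        (∑ i ∈ Icc 1 d, k i : ℕ) * fallingProd (Icc 1 d) k Y := by
  have hshift : ∑ a ∈ Icc 1 N, (if a + 1 ∈ Icc 1 d then
        k (a + 1) * fallingProd (Icc 1 d) (k - Pi.single (a + 1) 1 + Pi.single a 1) Y else 0) =
      ∑ j ∈ Ioc 1 d, k j * fallingProd (Icc 1 d) (k - Pi.single j 1 + Pi.single (j - 1) 1) Y := by
    have hIcc : (Icc 1 N).map (addRightEmbedding 1) ∩ Icc 1 d = Ioc 1 d := by
      ext j; simp only [map_add_right_Icc, mem_inter, mem_Icc, mem_Ioc]; omega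
    rw [← hIcc, ← sum_ite_mem, sum_map]
    simp only [addRightEmbedding_apply, Nat.add_sub_cancel]
  have hdiag : ∑ a ∈ Icc 1 N, (if a ∈ Icc 1 d then k a * fallingProd (Icc 1 d) k Y else 0) =
      (∑ i ∈ Icc 1 d, k i : ℕ) * fallingProd (Icc 1 d) k Y := by
    rw [sum_ite_mem, inter_eq_right.mpr (Icc_subset_Icc_right hdN), Nat.cast_sum, sum_mul]
  rw [← hshift, ← hdiag, ← sum_sub_distrib]
  refine sum_congr rfl fun a ha => natCast_mul_fallingProd_move (fun h => ?_) k Y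
  simp only [mem_Icc] at ha h ⊢
  omega

section RecursiveTree

variable (f g : ℕ → ℕ) {n m : ℕ}

theorem treeDepth_congr (i : ℕ) (h : ∀ j, 1 ≤ j → j ≤ i → f j = g j) :
    treeDepth f i = treeDepth g i := by
  induction i using Nat.strong_induction_on with
  | _ i ih =>
    rcases i with _ | i
    · simp [treeDepth]
    · rw [treeDepth, treeDepth, h (i + 1) (by omega) le_rfl,
        ih _ (Nat.lt_succ_of_le (min_le_right _ _)) fun j h1 hj => h j h1 (by omega)]

theorem treeDeg_congr (N i : ℕ) (h : ∀ j, 1 ≤ j → j ≤ N → f j = g j) :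
    treeDeg f N i = treeDeg g N i := by
  unfold treeDeg
  congr 2
  refine filter_congr fun j hj => ?_
  rw [mem_Icc] at hj
  rw [h j (by omega) hj.2]

theorem levelOneDegCount_congr (h : ∀ j, 1 ≤ j → j < n → f j = g j) :
    levelOneDegCount f n = levelOneDegCount g n := by
  funext i
  unfold levelOneDegCount
  congr 1
  refine filter_congr fun v hv => ?_
  rw [mem_Icc] at hv
  rw [treeDepth_congr f g v fun j h1 h2 => h j h1 (by omega),
    treeDeg_congr f g (n - 1) v fun j h1 h2 => h j h1 (by omega)]

theorem treeDepth_eq_zero_iff {i : ℕ} : treeDepth f i = 0 ↔ i = 0 := by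
  rcases i with _ | i <;> simp [treeDepth]

theorem treeDeg_pos {N i : ℕ} (hi : i ≠ 0) : 0 < treeDeg f N i := by
  simp [treeDeg, hi]

theorem treeDeg_le (N i : ℕ) : treeDeg f N i ≤ N - i + 1 := by
  have h := card_filter_le (Icc (i + 1) N) fun j => f j = i
  rw [Nat.card_Icc] at h
  unfold treeDeg
  split_ifs <;> omega

theorem treeDepth_update_of_lt {i : ℕ} (hi : i < n) :
    treeDepth (Function.update f n m) i = treeDepth f i :=
  treeDepth_congr _ _ i fun j _ hj => Function.update_of_ne (by omega) _ _

theorem treeDepth_update_self (hm : m < n) :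
    treeDepth (Function.update f n m) n = treeDepth f m + 1 := by
  obtain ⟨p, rfl⟩ : ∃ p, n = p + 1 := ⟨n - 1, by omega⟩
  rw [treeDepth, Function.update_self, min_eq_left (by omega), treeDepth_update_of_lt f hm]

theorem treeDeg_update_of_lt {i : ℕ} (hi : i < n) :
    treeDeg (Function.update f n m) n i = treeDeg f (n - 1) i + if m = i then 1 else 0 := by
  have hfilter : (Icc (i + 1) (n - 1)).filter (fun j => Function.update f n m j = i) =
      (Icc (i + 1) (n - 1)).filter (fun j => f j = i) :=
    filter_congr fun j hj => by rw [Function.update_of_ne (by simp at hj; omega)]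
  unfold treeDeg
  rw [← insert_Icc_sub_one_right_eq_Icc (by omega : i + 1 ≤ n), filter_insert,
    Function.update_self, hfilter]
  by_cases hmi : m = i
  · rw [if_pos hmi, card_insert_of_notMem (by simp; omega), if_pos hmi]
    ring
  · rw [if_neg hmi, if_neg hmi]
    rfl

theorem treeDeg_update_self (hn : n ≠ 0) : treeDeg (Function.update f n m) n n = 1 := by
  simp [treeDeg, hn]

theorem levelOneDegCount_eq_sum :
    levelOneDegCount f n = ∑ v ∈ Icc 1 (n - 1),
      if treeDepth f v = 1 then Pi.single (treeDeg f (n - 1) v) 1 else 0 := by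
  funext i
  simp [levelOneDegCount, card_filter, Finset.sum_apply, ite_apply, Pi.single_apply, ite_and,
    eq_comm]

theorem levelOneDegCount_update (hm : m < n) :
    levelOneDegCount (Function.update f n m) (n + 1) =
      (if treeDepth f m = 0 then Pi.single 1 1 else 0) + ∑ v ∈ Icc 1 (n - 1),
        if treeDepth f v = 1 then Pi.single (treeDeg f (n - 1) v + if m = v then 1 else 0) 1
        else 0 := by
  rw [levelOneDegCount_eq_sum, Nat.add_sub_cancel, ← insert_Icc_sub_one_right_eq_Icc (by omega),
    sum_insert (by simp; omega), treeDepth_update_self f hm, treeDeg_update_self f (by omega)]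
  congr 1
  · simp
  · refine sum_congr rfl fun v hv => ?_
    rw [mem_Icc] at hv
    rw [treeDepth_update_of_lt f (by omega), treeDeg_update_of_lt f (by omega)]

theorem levelOneDegCount_update_zero (hn : 0 < n) :
    levelOneDegCount (Function.update f n 0) (n + 1) = levelOneDegCount f n + Pi.single 1 1 := by
  rw [levelOneDegCount_update f hn, if_pos ((treeDepth_eq_zero_iff f).mpr rfl),
    levelOneDegCount_eq_sum, add_comm _ (Pi.single 1 1)]
  congr 1
  refine sum_congr rfl fun v hv => ?_
  rw [if_neg (show 0 ≠ v by simp at hv; omega), add_zero]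

theorem levelOneDegCount_update_of_treeDepth_eq_one (hm : m < n) (hdepth : treeDepth f m = 1) :
    levelOneDegCount (Function.update f n m) (n + 1) =
      levelOneDegCount f n - Pi.single (treeDeg f (n - 1) m) 1 +
        Pi.single (treeDeg f (n - 1) m + 1) 1 := by
  have hm0 : m ≠ 0 := fun h => by simp [h, treeDepth] at hdepth
  have hmem : m ∈ Icc 1 (n - 1) := by simp; omega
  rw [levelOneDegCount_update f hm, if_neg (by omega), zero_add, levelOneDegCount_eq_sum,
    ← add_sum_erase _ _ hmem, ← add_sum_erase _ _ hmem, if_pos hdepth, if_pos hdepth, if_pos rfl,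
    add_tsub_cancel_left, add_comm]
  congr 1
  refine sum_congr rfl fun v hv => ?_
  rw [if_neg (Ne.symm (ne_of_mem_erase hv)), add_zero]

theorem levelOneDegCount_update_of_treeDepth_ne_one (hm0 : m ≠ 0) (hm : m < n)
    (hdepth : treeDepth f m ≠ 1) :
    levelOneDegCount (Function.update f n m) (n + 1) = levelOneDegCount f n := by
  rw [levelOneDegCount_update f hm, if_neg (by rwa [treeDepth_eq_zero_iff]), zero_add,
    levelOneDegCount_eq_sum]
  refine sum_congr rfl fun v _ => ?_
  split_ifs with hv hmv <;> first | rfl | (subst hmv; contradiction)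

theorem sum_filter_treeDepth_eq_one {N : ℕ} (hN : n - 1 ≤ N) (φ : ℕ → ℝ) :
    ∑ v ∈ (Icc 1 (n - 1)).filter (treeDepth f · = 1), φ (treeDeg f (n - 1) v) =
      ∑ a ∈ Icc 1 N, levelOneDegCount f n a * φ a := by
  have hmaps : ∀ v ∈ (Icc 1 (n - 1)).filter (treeDepth f · = 1), treeDeg f (n - 1) v ∈ Icc 1 N := by
    intro v hv
    simp only [mem_filter, mem_Icc] at hv
    have := treeDeg_pos f (N := n - 1) (i := v) (by omega)
    have := treeDeg_le f (n - 1) v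
    simp only [mem_Icc]
    omega
  rw [← sum_fiberwise_of_maps_to hmaps]
  refine sum_congr rfl fun a _ => ?_
  rw [sum_congr rfl fun v hv => by rw [(mem_filter.mp hv).2], sum_const, nsmul_eq_mul,
    filter_filter]
  rfl

theorem sum_sub_levelOneDegCount_update {N : ℕ} (hN : n - 1 ≤ N) (Φ : (ℕ → ℕ) → ℝ) :
    ∑ m ∈ Icc 1 (n - 1),
        (Φ (levelOneDegCount (Function.update f n m) (n + 1)) - Φ (levelOneDegCount f n)) =
      ∑ a ∈ Icc 1 N, levelOneDegCount f n a *
        (Φ (levelOneDegCount f n - Pi.single a 1 + Pi.single (a + 1) 1) -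
          Φ (levelOneDegCount f n)) := by
  rw [← sum_filter_add_sum_filter_not _ (treeDepth f · = 1),
    sum_eq_zero (s := filter (¬treeDepth f · = 1) _) fun m hm => by
      simp only [mem_filter, mem_Icc] at hm
      rw [levelOneDegCount_update_of_treeDepth_ne_one f (by omega) (by omega) hm.2, sub_self],
    add_zero, ← sum_filter_treeDepth_eq_one f hN]
  refine sum_congr rfl fun m hm => ?_
  simp only [mem_filter, mem_Icc] at hm
  rw [levelOneDegCount_update_of_treeDepth_eq_one f (by omega) hm.2]

end RecursiveTree

theorem sum_fallingProd_levelOneDegCount_update (f : ℕ → ℕ) {n d : ℕ} (hn : 0 < n) (hd : 1 ≤ d)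
    (k : ℕ → ℕ) :
    ∑ m ∈ range n, fallingProd (Icc 1 d) k (levelOneDegCount (Function.update f n m) (n + 1)) =
      (n - (∑ i ∈ Icc 1 d, k i : ℕ)) * fallingProd (Icc 1 d) k (levelOneDegCount f n) +
        ∑ j ∈ Icc 1 d, k j * fallingProd (Icc 1 d) (k - Pi.single j 1 + Pi.single (j - 1) 1)
          (levelOneDegCount f n) := by
  set Y := levelOneDegCount f n
  have hroot : fallingProd (Icc 1 d) k (levelOneDegCount (Function.update f n 0) (n + 1)) -
      fallingProd (Icc 1 d) k Y =
        k 1 * fallingProd (Icc 1 d) (k - Pi.single 1 1 + Pi.single (1 - 1) 1) Y := by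
    rw [levelOneDegCount_update_zero f hn, fallingProd_add_single_of_mem (by simp [hd]),
      Nat.sub_self, fallingProd_congr_of_notMem (a := 0) (by simp)
        (k' := k - Pi.single 1 1 + Pi.single 0 1) (k := k - Pi.single 1 1) (Y' := Y) (Y := Y)
        (fun i hi => by simp [hi]) (fun _ _ => rfl)]
    ring
  have hrange : range n = insert 0 (Icc 1 (n - 1)) := by
    ext m; simp; omega
  have hincrement : ∑ m ∈ range n,
      (fallingProd (Icc 1 d) k (levelOneDegCount (Function.update f n m) (n + 1)) -
        fallingProd (Icc 1 d) k Y) =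
      ∑ j ∈ Icc 1 d, k j * fallingProd (Icc 1 d) (k - Pi.single j 1 + Pi.single (j - 1) 1) Y -
        (∑ i ∈ Icc 1 d, k i : ℕ) * fallingProd (Icc 1 d) k Y := by
    rw [hrange, sum_insert (by simp), hroot,
      sum_sub_levelOneDegCount_update f (N := n - 1 + d) le_self_add,
      sum_natCast_mul_fallingProd_move (by omega), ← add_sum_Ioc_eq_sum_Icc (M := ℝ) hd]
    ring
  rw [sum_sub_distrib, sum_const, card_range, nsmul_eq_mul] at hincrement
  linear_combination hincrement

theorem integral_comp_eq_average_of_indepFun {Ω β : Type*} [MeasurableSpace Ω] [MeasurableSpace β]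
    {μ : Measure Ω} {U : Ω → ℕ} {V : Ω → β} (hU : Measurable U) (hV : Measurable V)
    (hUV : IndepFun U V μ) {n : ℕ} (hlt : ∀ ω, U ω < n)
    (hunif : ∀ m < n, μ {ω | U ω = m} = ENNReal.ofReal (1 / n)) {g : ℕ → β → ℝ}
    (hg : ∀ m, Measurable (g m)) (hgi : ∀ m, Integrable (fun ω => g m (V ω)) μ) :
    ∫ ω, g (U ω) (V ω) ∂μ = 1 / n * ∫ ω, ∑ m ∈ range n, g m (V ω) ∂μ := by
  set δ : ℕ → ℕ → ℝ := fun m x => if x = m then 1 else 0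
  have hsplit : ∀ ω, g (U ω) (V ω) = ∑ m ∈ range n, δ m (U ω) * g m (V ω) := by
    intro ω
    simp [δ, ite_mul, hlt ω]
  have hδ : ∀ m, Measurable fun ω => δ m (U ω) := fun m => (measurable_of_countable (δ m)).comp hU
  have hprob : ∀ m ∈ range n, ∫ ω, δ m (U ω) ∂μ = 1 / n := by
    intro m hm
    have hindicator : (fun ω => δ m (U ω)) = {ω | U ω = m}.indicator 1 := by
      ext ω
      simp [δ, Set.indicator_apply]
    have hset : MeasurableSet {ω | U ω = m} := hU (measurableSet_singleton m)
    rw [hindicator, integral_indicator_one hset, measureReal_def,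
      hunif m (mem_range.mp hm), ENNReal.toReal_ofReal (by positivity)]
  rw [integral_congr_ae (ae_of_all _ hsplit), integral_finsetSum _ fun m _ => ?_,
    integral_finsetSum _ fun m _ => hgi m, mul_sum]
  · refine sum_congr rfl fun m hm => ?_
    rw [hUV.integral_fun_comp_mul_comp hU.aemeasurable hV.aemeasurable
      (measurable_of_countable _).aestronglyMeasurable (hg m).aestronglyMeasurable, hprob m hm]
  · exact (hgi m).bdd_mul (c := 1) (hδ m).aestronglyMeasurable
      (ae_of_all _ fun ω => by simp only [δ]; split_ifs <;> simp)

theorem natCast_mul_jointFactMoment_succ {Ω : Type*} [MeasurableSpace Ω] {μ : Measure Ω}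
    {F : ℕ → Ω → ℕ} (hmeas : ∀ j, Measurable (F j)) (hlt : ∀ j, 1 ≤ j → ∀ ω, F j ω < j)
    {n : ℕ} (hn : 0 < n) (hunif : ∀ m < n, μ {ω | F n ω = m} = ENNReal.ofReal (1 / n))
    (hindep : iIndepFun F μ) {d : ℕ} (hd : 1 ≤ d) (k : ℕ → ℕ) :
    n * jointFactMoment μ F (n + 1) d k =
      (n - (∑ i ∈ Icc 1 d, k i : ℕ)) * jointFactMoment μ F n d k +
        ∑ j ∈ Icc 1 d, k j * jointFactMoment μ F n d (k - Pi.single j 1 + Pi.single (j - 1) 1) := by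
  have := hindep.isProbabilityMeasure
  -- Parents of the vertices `1, …, n - 1` are `< n`, so reducing them mod `n` loses nothing and
  -- makes the state space finite; every function of the state is then integrable.
  set clip : (range n → ℕ) → (range n → Fin n) := fun v i => ⟨v i % n, Nat.mod_lt _ hn⟩
  set V : Ω → (range n → Fin n) := fun ω => clip fun i => F i ω
  set extend : (range n → Fin n) → ℕ → ℕ := fun v j => if h : j ∈ range n then v ⟨j, h⟩ else 0
  have hextend : ∀ ω j, 1 ≤ j → j < n → extend (V ω) j = F j ω := fun ω j h1 hj => by
    simp [extend, V, clip, hj, Nat.mod_eq_of_lt ((hlt j h1 ω).trans hj)]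
  have hV : Measurable V :=
    (measurable_of_countable clip).comp (measurable_pi_lambda _ fun i => hmeas i)
  have hUV : IndepFun (F n) V μ :=
    (hindep.indepFun_finset {n} (range n) (by simp) hmeas).comp
      (measurable_pi_apply (⟨n, mem_singleton_self n⟩ : ({n} : Finset ℕ)))
      (measurable_of_countable clip)
  have hint : ∀ h : (range n → Fin n) → ℝ, Integrable (fun ω => h (V ω)) μ :=
    fun h => Integrable.of_finite.comp_measurable hV
  have hmoment : ∀ κ, jointFactMoment μ F n d κ =
      ∫ ω, fallingProd (Icc 1 d) κ (levelOneDegCount (extend (V ω)) n) ∂μ := fun κ =>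
    integral_congr_ae <| ae_of_all _ fun ω => congrArg (fallingProd (Icc 1 d) κ)
      (levelOneDegCount_congr _ _ fun j h1 hj => (hextend ω j h1 hj).symm)
  have hint_moment : ∀ κ, Integrable
      (fun ω => fallingProd (Icc 1 d) κ (levelOneDegCount (extend (V ω)) n)) μ :=
    fun κ => hint fun v => fallingProd (Icc 1 d) κ (levelOneDegCount (extend v) n)
  set g : ℕ → (range n → Fin n) → ℝ := fun m v =>
    fallingProd (Icc 1 d) k (levelOneDegCount (Function.update (extend v) n m) (n + 1))
  have hmoment_succ : jointFactMoment μ F (n + 1) d k = ∫ ω, g (F n ω) (V ω) ∂μ := by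
    refine integral_congr_ae <| ae_of_all _ fun ω => congrArg (fallingProd (Icc 1 d) k)
      (levelOneDegCount_congr _ _ fun j h1 hj => ?_)
    rcases (Nat.lt_succ_iff.mp hj).lt_or_eq with hj | rfl
    · rw [Function.update_of_ne hj.ne, hextend ω j h1 hj]
    · rw [Function.update_self]
  rw [hmoment_succ, integral_comp_eq_average_of_indepFun (hmeas n) hV hUV (hlt n hn) hunif
      (fun _ => measurable_of_countable _) fun _ => hint _,
    integral_congr_ae (ae_of_all _ fun ω => sum_fallingProd_levelOneDegCount_update _ hn hd k),
    integral_add ((hint_moment k).const_mul _)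
      (integrable_finsetSum _ fun j _ => (hint_moment _).const_mul _),
    integral_const_mul, integral_finsetSum _ fun j _ => (hint_moment _).const_mul _]
  simp only [integral_const_mul, ← hmoment]
  field_simp

theorem update_update_eq_sub_single_add_single {j : ℕ} (hj : j ≠ 0) (k : ℕ → ℕ) :
    Function.update (Function.update k j (k j - 1)) (j - 1) (k (j - 1) + 1) =
      k - Pi.single j 1 + Pi.single (j - 1) 1 := by
  ext i
  simp only [Function.update_apply, Pi.add_apply, Pi.sub_apply, Pi.single_apply]
  split_ifs <;> subst_vars <;> omega

theorem jointFactMoment_recursion_general {Ω : Type*} [MeasurableSpace Ω] (μ : Measure Ω)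
    (F : ℕ → Ω → ℕ) (hmeas : ∀ j, Measurable (F j))
    (hlt : ∀ j, 1 ≤ j → ∀ ω, F j ω < j)
    (hunif : ∀ j, 1 ≤ j → ∀ m, m < j → μ {ω | F j ω = m} = ENNReal.ofReal (1 / j))
    (hindep : iIndepFun F μ)
    (n d : ℕ) (hn : 1 ≤ n) (hd : 1 ≤ d) (k : ℕ → ℕ) (K : ℕ)
    (hK : K = ∑ i ∈ Finset.Icc 1 d, k i) :
    (descPochhammer ℝ K).eval (n : ℝ) *
        jointFactMoment μ F (n + 1) d k =
      (descPochhammer ℝ K).eval ((n : ℝ) - 1) *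
          jointFactMoment μ F n d k +
        (descPochhammer ℝ (K - 1)).eval ((n : ℝ) - 1) *
          ∑ j ∈ Finset.Icc 1 d, (k j : ℝ) *
            jointFactMoment μ F n d
              (Function.update (Function.update k j (k j - 1)) (j - 1) (k (j - 1) + 1)) := by
  have hrec := natCast_mul_jointFactMoment_succ hmeas hlt hn (hunif n hn) hindep hd k
  rw [← hK] at hrec
  rw [sum_congr rfl fun j hj => by
    rw [update_update_eq_sub_single_add_single (by simp at hj; omega)]]
  refine descPochhammer_mul_eq_of_mul_eq (by positivity) hrec fun hK0 => sum_eq_zero fun j hj => ?_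
  rw [sum_eq_zero_iff.mp (hK.symm.trans hK0) j hj, Nat.cast_zero, zero_mul]

/-- Recursion for the joint factorial moments:
`(n)_K·E(n+1,k) = (n-1)_K·E(n,k) + (n-1)_{K-1}·Σ_j k_j·E(n, …, k_{j-1}+1, k_j-1, …)`,
where `K = k₁ + ⋯ + k_d` (for `j = 1` the shifted argument is
`(k₁-1, k₂, …, k_d)`: the update at index `0` does not affect the moment). -/
theorem jointFactMoment_recursion {Ω : Type*} [MeasurableSpace Ω] (μ : Measure Ω) [IsProbabilityMeasure μ]
    (F : ℕ → Ω → ℕ) (hmeas : ∀ j, Measurable (F j))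
    (hlt : ∀ j, 1 ≤ j → ∀ ω, F j ω < j)
    (hunif : ∀ j, 1 ≤ j → ∀ m, m < j → μ {ω | F j ω = m} = ENNReal.ofReal (1 / j))
    (hindep : iIndepFun F μ)
    (n d : ℕ) (hn : 1 ≤ n) (hd : 1 ≤ d) (k : ℕ → ℕ) (K : ℕ)
    (hK : K = ∑ i ∈ Finset.Icc 1 d, k i) :
    (descPochhammer ℝ K).eval (n : ℝ) *
        jointFactMoment μ F (n + 1) d k =
      (descPochhammer ℝ K).eval ((n : ℝ) - 1) *
          jointFactMoment μ F n d k +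
        (descPochhammer ℝ (K - 1)).eval ((n : ℝ) - 1) *
          ∑ j ∈ Finset.Icc 1 d, (k j : ℝ) *
            jointFactMoment μ F n d
              (Function.update (Function.update k j (k j - 1)) (j - 1) (k (j - 1) + 1)) :=
  jointFactMoment_recursion_general μ F hmeas hlt hunif hindep n d hn hd k K hK
end

section
/- Suppose a sequence of nonnegative reals e(n) satisfies the recursion (n)_K · e(n+1) = (n-1)_K · e(n) + (n-1)_{K-1} · K · (1 + o(1)) as n → ∞, for a fixed positive integer K. Then e(n) → 1 as n → ∞. -/
open Filter Finset Asymptotics Topology Polynomial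

/-! With `D n = (n - 1)_K`, the identity `(x)_K - (x - 1)_K = K (x - 1)_{K-1}` turns the recursion
into `D (n + 1) e (n + 1) - D n e n = (D (n + 1) - D n) g n`. As `D` increases to infinity, the
Stolz–Cesàro argument gives `e n = D n e n / D n → lim g = 1`. -/

theorem descPochhammer_eval_sub_eval_sub_one {R : Type*} [CommRing R] (k : ℕ) (x : R) :
    (descPochhammer R (k + 1)).eval x - (descPochhammer R (k + 1)).eval (x - 1) =
      (k + 1) * (descPochhammer R k).eval (x - 1) := by
  have h := congrArg (eval x) (descPochhammer_succ_comp_X_sub_one R k)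
  simp only [smul_eq_mul, eval_comp, eval_sub, eval_X, eval_one, eval_mul, eval_add,
    eval_natCast] at h
  linear_combination -h

theorem Nat.tendsto_descFactorial_atTop {k : ℕ} (hk : k ≠ 0) :
    Tendsto (fun n : ℕ => n.descFactorial k) atTop atTop :=
  tendsto_atTop_mono (fun n => (Nat.sub_le_sub_right n.le_succ k).trans
    ((Nat.le_self_pow hk _).trans (n.pow_sub_le_descFactorial k))) (tendsto_sub_atTop_nat k)

theorem tendsto_div_of_sub_eq_sub_mul {u D g : ℕ → ℝ} {l : ℝ} (hD : Monotone D)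
    (hD_top : Tendsto D atTop atTop) (hg : Tendsto g atTop (𝓝 l))
    (hu : ∀ᶠ n in atTop, u (n + 1) - u n = (D (n + 1) - D n) * g n) :
    Tendsto (fun n => u n / D n) atTop (𝓝 l) := by
  set w : ℕ → ℝ := fun n => D (n + 1) - D n
  have hsum_w (n : ℕ) : ∑ i ∈ range n, w i = D n - D 0 := sum_range_sub D n
  have hsum_w_top : Tendsto (fun n => ∑ i ∈ range n, w i) atTop atTop := by
    simpa only [hsum_w, sub_eq_add_neg] using tendsto_atTop_add_const_right _ (-D 0) hD_top
  have hconst (c : ℝ) : (fun _ => c) =o[atTop] D :=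
    isLittleO_const_left.2 (Or.inr (tendsto_norm_atTop_atTop.comp hD_top))
  have herr : (fun n => u (n + 1) - u n - l * w n) =o[atTop] w := by
    have : (fun n => w n * (g n - l)) =o[atTop] w := by
      simpa using (isBigO_refl w atTop).mul_isLittleO
        ((isLittleO_one_iff ℝ).2 (tendsto_sub_nhds_zero_iff.2 hg))
    refine this.congr' ?_ EventuallyEq.rfl
    filter_upwards [hu] with n hn
    rw [hn]
    ring
  have hsum := herr.sum_range (fun n => sub_nonneg.2 (hD n.le_succ)) hsum_w_top
  simp only [sum_sub_distrib, sum_range_sub u, ← mul_sum, hsum_w] at hsum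
  have hmain : (fun n => u n - l * D n) =o[atTop] D :=
    ((hsum.trans_isBigO ((isBigO_refl D _).sub (hconst (D 0)).isBigO)).add
      (hconst (u 0 - l * D 0))).congr_left fun n => by ring
  rw [← tendsto_sub_nhds_zero_iff]
  refine hmain.tendsto_div_nhds_zero.congr' ?_
  filter_upwards [hD_top.eventually_gt_atTop 0] with n hn
  field_simp

theorem recursion_limit_general (K : ℕ) (hK : 1 ≤ K) (e : ℕ → ℝ)
    (g : ℕ → ℝ) (hg : Tendsto g atTop (nhds 1))
    (hrec : ∀ᶠ n : ℕ in atTop,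
      (descPochhammer ℝ K).eval (n : ℝ) * e (n + 1) =
        (descPochhammer ℝ K).eval ((n : ℝ) - 1) * e n +
          (descPochhammer ℝ (K - 1)).eval ((n : ℝ) - 1) * (K : ℝ) * g n) :
    Tendsto e atTop (nhds 1) := by
  obtain ⟨k, rfl⟩ : ∃ k, K = k + 1 := ⟨K - 1, by omega⟩
  -- truncated subtraction makes `D 0 = 0`, so that `D` is monotone on all of `ℕ`
  set D : ℕ → ℝ := fun n => ((n - 1).descFactorial (k + 1) : ℝ)
  have hD_eval (n : ℕ) (hn : 1 ≤ n) : (descPochhammer ℝ (k + 1)).eval ((n : ℝ) - 1) = D n := by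
    rw [← Nat.cast_one, ← Nat.cast_sub hn, descPochhammer_eval_eq_descFactorial]
  have hD_mono : Monotone D := fun m n hmn =>
    Nat.cast_le.2 (Nat.descFactorial_le _ (Nat.sub_le_sub_right hmn 1))
  have hD_top : Tendsto D atTop atTop := tendsto_natCast_atTop_atTop.comp
    ((Nat.tendsto_descFactorial_atTop k.succ_ne_zero).comp (tendsto_sub_atTop_nat 1))
  have hstep : ∀ᶠ n in atTop, D (n + 1) * e (n + 1) - D n * e n = (D (n + 1) - D n) * g n := by
    filter_upwards [hrec, eventually_ge_atTop 1] with n hn hn1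
    rw [← hD_eval n hn1, ← hD_eval (n + 1) le_add_self, Nat.cast_succ, add_sub_cancel_right,
      descPochhammer_eval_sub_eval_sub_one, hn, Nat.add_sub_cancel]
    push_cast
    ring
  refine (tendsto_div_of_sub_eq_sub_mul (u := fun n => D n * e n) hD_mono hD_top hg hstep).congr' ?_
  filter_upwards [hD_top.eventually_gt_atTop 0] with n hn
  exact mul_div_cancel_left₀ _ hn.ne'

/-- If a sequence of nonnegative reals `e n` satisfies the recursion
`(n)_K · e(n+1) = (n-1)_K · e(n) + (n-1)_{K-1} · K · (1 + o(1))` as `n → ∞`,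
for a fixed positive integer `K`, then `e n → 1`. -/
theorem recursion_limit (K : ℕ) (hK : 1 ≤ K) (e : ℕ → ℝ) (he : ∀ n, 0 ≤ e n)
    (g : ℕ → ℝ) (hg : Tendsto g atTop (nhds 1))
    (hrec : ∀ᶠ n : ℕ in atTop,
      (descPochhammer ℝ K).eval (n : ℝ) * e (n + 1) =
        (descPochhammer ℝ K).eval ((n : ℝ) - 1) * e n +
          (descPochhammer ℝ (K - 1)).eval ((n : ℝ) - 1) * (K : ℝ) * g n) :
    Tendsto e atTop (nhds 1) :=
  recursion_limit_general K hK e g hg hrec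
end

section
/- If for every d ≥ 1 and all nonnegative integers k₁,...,k_d the joint factorial moments satisfy E[Π_{i=1}^d (X[n,i])_{k_i}] → 1 as n → ∞, and the X[n,i] are nonnegative integer-valued random variables, then (X[n,1],...,X[n,d]) converges in distribution to a vector of d independent Poisson random variables with mean 1, for each fixed d. -/
/-!
For fixed `m`, the indicator `𝟙{x = m}` is the finite alternating sum
`∑ⱼ (-1)^(j-m) C(j,m) C(x,j)`, and cutting it off after `j = J` errs by at most the absolute
value of the next term, `C(J+1,m) C(x,J+1)`. Because `(x)ₖ = k! C(x,k)`, the hypothesis says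
`E ∏ᵢ C(Xᵢ, kᵢ) → ∏ᵢ 1/kᵢ!`, so the expectation of every product of binomial polynomials
in the separate coordinates converges, to the value obtained by replacing each `C(Xᵢ, k)` by `1/k!`.
For the product of the truncated indicators this limit is `∏ᵢ ∑_{j ≤ J} (-1)^(j-mᵢ) C(j,mᵢ)/j!`,
which tends to `∏ᵢ e⁻¹/mᵢ!` as `J → ∞`; for the error bound `∏ᵢ (1 + C(J+1,mᵢ) C(Xᵢ,J+1)) - 1`
it is `∏ᵢ (1 + C(J+1,mᵢ)/(J+1)!) - 1`, which tends to `0`. Letting first `n → ∞` and then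
`J → ∞` gives the theorem.
-/

open Finset Filter MeasureTheory Topology
open scoped Nat

lemma abs_ite_eq_zero_sub_sum_range_choose_le (y T : ℕ) :
    |(if y = 0 then 1 else 0 : ℝ) - ∑ t ∈ range (T + 1), (-1) ^ t * (y.choose t : ℝ)|
      ≤ y.choose (T + 1) := by
  cases y with
  | zero => simp [Finset.sum_range_succ']
  | succ z =>
    have h : ∑ t ∈ range (T + 1), (-1) ^ t * ((z + 1).choose t : ℝ) = (-1) ^ T * z.choose T := by
      exact_mod_cast Int.alternating_sum_range_choose_eq_choose
    rw [h, Nat.choose_succ_succ, if_neg (Nat.succ_ne_zero z), zero_sub, abs_neg, abs_mul,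
      abs_pow, abs_neg, abs_one, one_pow, one_mul, Nat.abs_cast]
    push_cast
    linarith [(Nat.cast_nonneg (z.choose (T + 1)) : (0:ℝ) ≤ _)]

/-- `𝟙{x = m} = ∑ⱼ inclExclCoeff m j * x.choose j`, a finite sum for each `x`. For `j < m` the
truncated `j - m` is harmless because `j.choose m = 0`. -/
def inclExclCoeff (m j : ℕ) : ℝ := (-1) ^ (j - m) * j.choose m

lemma inclExclCoeff_self_add (m t : ℕ) : inclExclCoeff m (m + t) = (-1) ^ t * (m + t).choose m := by
  simp [inclExclCoeff]

lemma inclExclCoeff_of_lt {m j : ℕ} (h : j < m) : inclExclCoeff m j = 0 := by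
  simp [inclExclCoeff, Nat.choose_eq_zero_of_lt h]

lemma hasSum_inclExclCoeff_div_factorial (m : ℕ) :
    HasSum (fun j => inclExclCoeff m j / j !) (Real.exp (-1) / m !) := by
  rw [← hasSum_nat_add_iff' m, sum_eq_zero fun j hj => by
    rw [inclExclCoeff_of_lt (mem_range.1 hj), zero_div], sub_zero]
  have hexp : HasSum (fun t : ℕ => (-1 : ℝ) ^ t / t !) (Real.exp (-1)) := by
    rw [Real.exp_eq_exp_ℝ]
    exact NormedSpace.expSeries_div_hasSum_exp (-1)
  have hterm : (fun t => inclExclCoeff m (t + m) / (t + m)!)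
      = fun t => (-1 : ℝ) ^ t / t ! / m ! := by
    funext t
    rw [add_comm t m, inclExclCoeff_self_add, ← Nat.add_choose_mul_factorial_mul_factorial,
      Nat.choose_symm_add]
    have := (Nat.choose_pos (Nat.le_add_left t m)).ne'
    push_cast
    field_simp
  rw [hterm]
  exact hexp.div_const _

lemma abs_ite_eq_sub_sum_inclExclCoeff_le {x m J : ℕ} (hmJ : m ≤ J) :
    |(if x = m then 1 else 0 : ℝ) - ∑ j ∈ range (J + 1), inclExclCoeff m j * x.choose j|
      ≤ |inclExclCoeff m (J + 1)| * x.choose (J + 1) := by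
  obtain ⟨T, rfl⟩ := Nat.exists_eq_add_of_le hmJ
  rcases lt_or_ge x m with hxm | hmx
  · have hterm : ∀ j, inclExclCoeff m j * x.choose j = 0 := fun j => by
      rcases lt_or_ge j m with hjm | hmj
      · rw [inclExclCoeff_of_lt hjm, zero_mul]
      · rw [Nat.choose_eq_zero_of_lt (hxm.trans_le hmj), Nat.cast_zero, mul_zero]
    simp only [hterm, sum_const_zero, if_neg hxm.ne, sub_zero, abs_zero]
    positivity
  obtain ⟨y, rfl⟩ := Nat.exists_eq_add_of_le hmx
  have hchoose : ∀ t, inclExclCoeff m (m + t) * (m + y).choose (m + t)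
      = (m + y).choose m * ((-1) ^ t * y.choose t) := fun t => by
    have h := Nat.choose_mul (n := m + y) (Nat.le_add_right m t)
    simp only [Nat.add_sub_cancel_left] at h
    have hR : ((m + y).choose (m + t) : ℝ) * (m + t).choose m = (m + y).choose m * y.choose t := by
      exact_mod_cast h
    rw [inclExclCoeff_self_add]
    linear_combination (-1 : ℝ) ^ t * hR
  have hsum : ∑ j ∈ range (m + T + 1), inclExclCoeff m j * (m + y).choose j
      = (m + y).choose m * ∑ t ∈ range (T + 1), (-1) ^ t * (y.choose t : ℝ) := by
    rw [add_assoc, sum_range_add, sum_eq_zero fun j hj => by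
      rw [inclExclCoeff_of_lt (mem_range.1 hj), zero_mul], zero_add, mul_sum]
    exact sum_congr rfl fun t _ => hchoose t
  have hind : (if m + y = m then 1 else 0 : ℝ) = (m + y).choose m * (if y = 0 then 1 else 0) := by
    rcases Nat.eq_zero_or_pos y with rfl | hy
    · simp
    · simp [hy.ne']
  have hnext : |inclExclCoeff m (m + T + 1)| * (m + y).choose (m + T + 1)
      = (m + y).choose m * y.choose (T + 1) := by
    rw [← Nat.abs_cast, ← abs_mul, add_assoc, hchoose]
    simp [abs_mul]
  rw [hsum, hind, ← mul_sub, abs_mul, Nat.abs_cast, hnext]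
  gcongr
  exact abs_ite_eq_zero_sub_sum_range_choose_le y T

lemma abs_prod_sub_prod_le {ι : Type*} {s : Finset ι} {a b h : ι → ℝ}
    (ha : ∀ i ∈ s, |a i| ≤ 1) (hab : ∀ i ∈ s, |a i - b i| ≤ h i) :
    |∏ i ∈ s, a i - ∏ i ∈ s, b i| ≤ ∏ i ∈ s, (1 + h i) - 1 := by
  induction s using Finset.cons_induction with
  | empty => simp
  | cons x s hx ih =>
    simp only [forall_mem_cons] at ha hab
    have hb : |∏ i ∈ s, b i| ≤ ∏ i ∈ s, (1 + h i) := by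
      rw [abs_prod]
      refine prod_le_prod (fun i _ => abs_nonneg _) fun i hi => ?_
      have := abs_sub_abs_le_abs_sub (b i) (a i)
      rw [abs_sub_comm] at this
      linarith [ha.2 i hi, hab.2 i hi]
    have hx0 : 0 ≤ h x := (abs_nonneg _).trans hab.1
    have hAB := ih ha.2 hab.2
    rw [prod_cons, prod_cons, prod_cons]
    calc |a x * ∏ i ∈ s, a i - b x * ∏ i ∈ s, b i|
        = |a x * (∏ i ∈ s, a i - ∏ i ∈ s, b i) + (a x - b x) * ∏ i ∈ s, b i| := by ring_nf
      _ ≤ |a x| * |∏ i ∈ s, a i - ∏ i ∈ s, b i| + |a x - b x| * |∏ i ∈ s, b i| := by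
        rw [← abs_mul, ← abs_mul]; exact abs_add_le _ _
      _ ≤ 1 * (∏ i ∈ s, (1 + h i) - 1) + h x * ∏ i ∈ s, (1 + h i) := by
        gcongr
        · exact ha.1
        · exact hab.1
      _ = (1 + h x) * ∏ i ∈ s, (1 + h i) - 1 := by ring

lemma tendsto_of_forall_approx {β : Type*} {l : Filter β} {P : β → ℝ} {A G : ℕ → β → ℝ}
    {α γ : ℕ → ℝ} {L : ℝ} (hbound : ∀ᶠ J in atTop, ∀ᶠ n in l, |P n - A J n| ≤ G J n)
    (hA : ∀ J, Tendsto (A J) l (𝓝 (α J))) (hG : ∀ J, Tendsto (G J) l (𝓝 (γ J)))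
    (hα : Tendsto α atTop (𝓝 L)) (hγ : Tendsto γ atTop (𝓝 0)) :
    Tendsto P l (𝓝 L) := by
  rw [Metric.tendsto_nhds]
  intro ε hε
  obtain ⟨J, hJ, hαJ, hγJ⟩ := (hbound.and ((Metric.tendsto_nhds.1 hα (ε / 4) (by positivity)).and
    (Metric.tendsto_nhds.1 hγ (ε / 4) (by positivity)))).exists
  filter_upwards [hJ, Metric.tendsto_nhds.1 (hA J) (ε / 4) (by positivity),
    Metric.tendsto_nhds.1 (hG J) (ε / 4) (by positivity)] with n hn hAn hGn
  rw [Real.dist_eq] at *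
  rw [sub_zero] at hγJ
  rw [abs_lt]
  constructor <;> linarith [abs_lt.1 hαJ, abs_lt.1 hγJ, abs_lt.1 hAn, abs_lt.1 hGn, abs_le.1 hn]

lemma sum_pair_zero_ite_mul (J : ℕ) (c : ℝ) (f : ℕ → ℝ) :
    ∑ j ∈ ({0, J + 1} : Finset ℕ), (if j = 0 then 1 else c) * f j = f 0 + c * f (J + 1) := by
  rw [sum_pair (Nat.succ_ne_zero J).symm]
  simp

lemma abs_prod_ite_eq_sub_prod_sum_inclExclCoeff_le {ι : Type*} [Fintype ι] {x m : ι → ℕ} {J : ℕ}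
    (hmJ : ∀ i, m i ≤ J) :
    |(∏ i, if x i = m i then (1 : ℝ) else 0)
        - ∏ i, ∑ j ∈ range (J + 1), inclExclCoeff (m i) j * (x i).choose j|
      ≤ (∏ i, ∑ j ∈ ({0, J + 1} : Finset ℕ),
          (if j = 0 then 1 else |inclExclCoeff (m i) (J + 1)|) * ((x i).choose j : ℝ)) - 1 := by
  simp only [sum_pair_zero_ite_mul, Nat.choose_zero_right, Nat.cast_one]
  exact abs_prod_sub_prod_le (fun i _ => by split_ifs <;> simp)
    fun i _ => abs_ite_eq_sub_sum_inclExclCoeff_le (hmJ i)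

section FactorialMoments

variable {Ω ι β : Type*} [MeasurableSpace Ω] {μ : Measure Ω} {l : Filter β}

lemma eventually_integrable_of_tendsto_integral {F : β → Ω → ℝ} {L : ℝ}
    (hF : Tendsto (fun n => ∫ ω, F n ω ∂μ) l (𝓝 L)) (hL : L ≠ 0) :
    ∀ᶠ n in l, Integrable (F n) μ :=
  (hF.eventually_ne hL).mono fun _ hn => by_contra fun h => hn (integral_undef h)

variable [Fintype ι] {X : β → ι → Ω → ℕ}

variable (μ l X) in
def FactorialMomentsTendstoOne : Prop :=
  ∀ k : ι → ℕ, Tendsto (fun n => ∫ ω, ∏ i, (descPochhammer ℝ (k i)).eval (X n i ω : ℝ) ∂μ) l (𝓝 1)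

lemma FactorialMomentsTendstoOne.tendsto_integral_prod_choose
    (hmom : FactorialMomentsTendstoOne μ l X) (k : ι → ℕ) :
    Tendsto (fun n => ∫ ω, ∏ i, ((X n i ω).choose (k i) : ℝ) ∂μ) l (𝓝 (∏ i, ((k i)! : ℝ)⁻¹)) := by
  have hchoose : ∀ x : ℕ, ∀ j, (x.choose j : ℝ) = (j ! : ℝ)⁻¹ * (descPochhammer ℝ j).eval (x : ℝ) :=
    fun x j => by
      rw [descPochhammer_eval_eq_descFactorial, Nat.descFactorial_eq_factorial_mul_choose]
      push_cast
      field_simp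
  simp_rw [hchoose, prod_mul_distrib, integral_const_mul]
  simpa using (hmom k).const_mul (∏ i, ((k i)! : ℝ)⁻¹)

lemma FactorialMomentsTendstoOne.tendsto_integral_prod_sum_choose
    (hmom : FactorialMomentsTendstoOne μ l X) (t : ι → Finset ℕ) (a : ι → ℕ → ℝ) :
    (∀ᶠ n in l, Integrable (fun ω => ∏ i, ∑ j ∈ t i, a i j * (X n i ω).choose j) μ) ∧
      Tendsto (fun n => ∫ ω, ∏ i, ∑ j ∈ t i, a i j * (X n i ω).choose j ∂μ) l
        (𝓝 (∏ i, ∑ j ∈ t i, a i j / j !)) := by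
  classical
  simp_rw [prod_univ_sum, prod_mul_distrib, div_eq_mul_inv, prod_mul_distrib]
  have hint : ∀ᶠ n in l, ∀ p ∈ Fintype.piFinset t,
      Integrable (fun ω => (∏ i, a i (p i)) * ∏ i, ((X n i ω).choose (p i) : ℝ)) μ :=
    (eventually_all_finset _).2 fun p _ =>
      (eventually_integrable_of_tendsto_integral (hmom.tendsto_integral_prod_choose p)
        (prod_ne_zero_iff.2 fun i _ => by positivity)).mono fun _ h => h.const_mul _
  refine ⟨hint.mono fun _ h => integrable_finsetSum _ h, ?_⟩
  refine (tendsto_finsetSum _ fun p _ =>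
    (hmom.tendsto_integral_prod_choose p).const_mul _).congr' ?_
  filter_upwards [hint] with n hn
  rw [integral_finsetSum _ hn]
  simp_rw [integral_const_mul]

theorem FactorialMomentsTendstoOne.tendsto_measureReal [IsProbabilityMeasure μ]
    (hmom : FactorialMomentsTendstoOne μ l X) (hmeas : ∀ n i, Measurable (X n i)) (m : ι → ℕ) :
    Tendsto (fun n => μ.real {ω | ∀ i, X n i ω = m i}) l (𝓝 (∏ i, Real.exp (-1) / (m i)!)) := by
  have hA J := hmom.tendsto_integral_prod_sum_choose (fun _ => range (J + 1))
    (fun i => inclExclCoeff (m i))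
  -- the factors `1 + |inclExclCoeff (m i) (J + 1)| * C(Xᵢ, J + 1)` of the error bound
  have hG J := hmom.tendsto_integral_prod_sum_choose (fun _ => {0, J + 1})
    (fun i j => if j = 0 then 1 else |inclExclCoeff (m i) (J + 1)|)
  refine tendsto_of_forall_approx ?_ (fun J => (hA J).2) (fun J => (hG J).2.sub_const 1) ?_ ?_
  · filter_upwards [eventually_all.2 fun i => eventually_ge_atTop (m i)] with J hJ
    filter_upwards [(hA J).1, (hG J).1] with n hAn hGn
    have hS : MeasurableSet {ω | ∀ i, X n i ω = m i} := by
      simp only [Set.ofPred_forall]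
      exact MeasurableSet.iInter fun i => hmeas n i (measurableSet_singleton _)
    have hind : {ω | ∀ i, X n i ω = m i}.indicator 1
        = fun ω => ∏ i, if X n i ω = m i then (1 : ℝ) else 0 := by
      funext ω
      simp [Set.indicator_apply, prod_boole]
    have hSint : Integrable (fun ω => ∏ i, if X n i ω = m i then (1 : ℝ) else 0) μ := by
      rw [← hind]
      exact (integrable_const 1).indicator hS
    rw [← integral_indicator_one hS, hind, ← integral_sub hSint hAn]
    refine (norm_integral_le_of_norm_le (hGn.sub (integrable_const 1)) (ae_of_all _ fun ω =>
      (Real.norm_eq_abs _).trans_le (abs_prod_ite_eq_sub_prod_sum_inclExclCoeff_le hJ))).trans_eq ?_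
    simp only [Pi.sub_apply]
    rw [integral_sub hGn (integrable_const 1)]
    simp
  · exact tendsto_finsetProd _ fun i _ =>
      (hasSum_inclExclCoeff_div_factorial (m i)).tendsto_sum_nat.comp (tendsto_add_atTop_nat 1)
  · have hnext : ∀ i, Tendsto (fun J => |inclExclCoeff (m i) (J + 1)| * ((J + 1)! : ℝ)⁻¹) atTop
        (𝓝 0) := fun i => by
      simpa [abs_div, div_eq_mul_inv, Function.comp_def] using
        (hasSum_inclExclCoeff_div_factorial (m i)).summable.tendsto_atTop_zero.abs.comp
          (tendsto_add_atTop_nat 1)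
    simp_rw [div_eq_mul_inv, sum_pair_zero_ite_mul]
    simpa using (tendsto_finsetProd univ fun i _ => (hnext i).const_add 1).sub_const 1

end FactorialMoments

/-- Multivariate method of moments for Poisson limits: if the ℕ-valued random
variables `X n i` have all joint factorial moments
`E[Π_{i=1}^d (X[n,i])_{k_i}] → 1` as `n → ∞`, then for each fixed `d` the vector
`(X[n,1], …, X[n,d])` converges in distribution to `d` independent Poisson
random variables with mean 1. -/
theorem method_of_moments_poisson {Ω : Type*} [MeasurableSpace Ω]
    (μ : Measure Ω) [IsProbabilityMeasure μ]
    (X : ℕ → ℕ → Ω → ℕ) (hmeas : ∀ n i, Measurable (X n i))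
    (hmom : ∀ d : ℕ, 1 ≤ d → ∀ k : ℕ → ℕ,
      Tendsto (fun n : ℕ =>
          ∫ ω, ∏ i ∈ Finset.Icc 1 d,
            (descPochhammer ℝ (k i)).eval ((X n i ω : ℕ) : ℝ) ∂μ)
        atTop (nhds 1)) :
    ∀ d : ℕ, 1 ≤ d → ∀ m : ℕ → ℕ,
      Tendsto (fun n : ℕ =>
          (μ {ω | ∀ i ∈ Finset.Icc 1 d, X n i ω = m i}).toReal)
        atTop (nhds (∏ i ∈ Finset.Icc 1 d,
          Real.exp (-1) / (Nat.factorial (m i) : ℝ))) := by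
  intro d hd m
  have hmom' : FactorialMomentsTendstoOne μ atTop fun n (i : Icc 1 d) => X n i := fun k => by
    convert hmom d hd (fun i => if h : i ∈ Icc 1 d then k ⟨i, h⟩ else 0) using 4 with n ω
    conv_rhs => rw [← prod_coe_sort]
    simp
  have h := hmom'.tendsto_measureReal (fun n i => hmeas n i) (fun i => m i)
  rw [prod_coe_sort (Icc 1 d) fun i => Real.exp (-1) / (m i)!] at h
  refine h.congr fun n => ?_
  simp [Measure.real]
end
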